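/- arXiv:2411.01364 — 9 statements merged into one kernel-verified Lean document; each statement's English description precedes it below -/
import Mathlib

section
/- Any two probability measures μ₁, μ₂ on ℝ with finite second moments have a least upper bound with respect to the stochastic order: there exists ν ∈ 𝒫₂(ℝ) with μ₁ ≤_st ν, μ₂ ≤_st ν, and ν ≤_st ρ for any ρ that is an upper bound of both μ₁ and μ₂. The measure ν is the one whose cumulative distribution function is min(F_{μ₁}, F_{μ₂}). -/
/-!
For probability measures on `ℝ`, `μ ≤_st ν` holds iff `F_ν ≤ F_μ` pointwise. Testing against the
monotone indicator of `Ioi x` gives one direction. For the other, the layer-cake formula writes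
`∫ f` for monotone `f ≥ 0` through the measures of the superlevel sets of `f`, which are upper sets
of `ℝ`, i.e. complements of `∅`, `univ`, `Iic a` or `Iio a`, and the CDF controls all of these.
Hence the measure with CDF `min F_{μ₁} F_{μ₂}` is the least upper bound. Its second moment is
finite because `min F₁ F₂ + max F₁ F₂ = F₁ + F₂` makes it dominated by `μ₁ + μ₂`.
-/

open MeasureTheory Filter Set

noncomputable section

/-- The stochastic order on measures on ℝ: `μ ≤_st ν` iff `∫ f dμ ≤ ∫ f dν`
for every bounded increasing function `f : ℝ → ℝ`. -/
def StOrder (μ ν : Measure ℝ) : Prop :=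
  ∀ f : ℝ → ℝ, Monotone f → (∃ C : ℝ, ∀ x, |f x| ≤ C) →
    ∫ x, f x ∂μ ≤ ∫ x, f x ∂ν

/-- `𝒫₂(ℝ)`: probability measures on ℝ with finite second moment. -/
def P2 : Set (Measure ℝ) :=
  {μ | IsProbabilityMeasure μ ∧ Integrable (fun x : ℝ => x ^ 2) μ}

open Topology ProbabilityTheory

theorem IsLowerSet.eq_empty_or_univ_or_Iic_or_Iio {α : Type*}
    [ConditionallyCompleteLinearOrder α] {s : Set α} (hs : IsLowerSet s) :
    s = ∅ ∨ s = univ ∨ (∃ a, s = Iic a) ∨ ∃ a, s = Iio a := by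
  rcases s.eq_empty_or_nonempty with hempty | hne
  · exact Or.inl hempty
  by_cases hbdd : BddAbove s
  · by_cases hmem : sSup s ∈ s
    · exact Or.inr <| Or.inr <| Or.inl ⟨sSup s, Set.ext fun x =>
        ⟨fun hx => le_csSup hbdd hx, fun hx => hs hx hmem⟩⟩
    · refine Or.inr <| Or.inr <| Or.inr ⟨sSup s, Set.ext fun x => ⟨fun hx => ?_, fun hx => ?_⟩⟩
      · exact (le_csSup hbdd hx).lt_of_ne (ne_of_mem_of_not_mem hx hmem)
      · obtain ⟨y, hy, hxy⟩ := exists_lt_of_lt_csSup hne hx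
        exact hs hxy.le hy
  · refine Or.inr <| Or.inl <| eq_univ_of_forall fun x => ?_
    obtain ⟨y, hy, hxy⟩ := not_bddAbove_iff.1 hbdd x
    exact hs hxy.le hy

section CDFComparison

variable {μ ν : Measure ℝ}

theorem measure_Iio_le_of_forall_measure_Iic_le (h : ∀ x, ν (Iic x) ≤ μ (Iic x)) (q : ℝ) :
    ν (Iio q) ≤ μ (Iio q) := by
  obtain ⟨u, hu_mono, hu_lt, hu_lim⟩ := exists_seq_strictMono_tendsto q
  rw [← iUnion_Iic_eq_Iio_of_lt_of_tendsto hu_lt hu_lim,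
    Monotone.measure_iUnion fun m n hmn => Iic_subset_Iic.2 (hu_mono.monotone hmn)]
  exact iSup_le fun n => (h (u n)).trans (measure_mono (subset_iUnion (fun n => Iic (u n)) n))

theorem IsLowerSet.measure_le_of_forall_measure_Iic_le (h : ∀ x, ν (Iic x) ≤ μ (Iic x))
    {s : Set ℝ} (hs : IsLowerSet s) : ν s ≤ μ s := by
  rcases hs.eq_empty_or_univ_or_Iic_or_Iio with rfl | rfl | ⟨a, rfl⟩ | ⟨a, rfl⟩
  · simp
  · exact le_of_tendsto' (tendsto_measure_Iic_atTop ν) fun x =>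
      (h x).trans (measure_mono (subset_univ _))
  · exact h a
  · exact measure_Iio_le_of_forall_measure_Iic_le h a

theorem IsUpperSet.measure_le_of_forall_measure_Iic_le [IsProbabilityMeasure μ]
    [IsProbabilityMeasure ν] (h : ∀ x, ν (Iic x) ≤ μ (Iic x)) {s : Set ℝ} (hs : IsUpperSet s) :
    μ s ≤ ν s := by
  have hs_meas : MeasurableSet sᶜ := hs.compl.ordConnected.measurableSet
  rw [← compl_compl s, prob_compl_eq_one_sub hs_meas, prob_compl_eq_one_sub hs_meas]
  exact tsub_le_tsub_left (hs.compl.measure_le_of_forall_measure_Iic_le h) 1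

theorem integral_le_integral_of_forall_measure_Iic_le [IsProbabilityMeasure μ]
    [IsProbabilityMeasure ν] (h : ∀ x, ν (Iic x) ≤ μ (Iic x)) {g : ℝ → ℝ} (hg : Monotone g)
    (hg_nonneg : ∀ x, 0 ≤ g x) {C : ℝ} (hgC : ∀ x, g x ≤ C) : ∫ x, g x ∂μ ≤ ∫ x, g x ∂ν := by
  have hg_int : Integrable g ν := .of_bound hg.measurable.aestronglyMeasurable C
    (ae_of_all _ fun x => by rw [Real.norm_of_nonneg (hg_nonneg x)]; exact hgC x)
  have hlayer : ∫⁻ x, ENNReal.ofReal (g x) ∂μ ≤ ∫⁻ x, ENNReal.ofReal (g x) ∂ν := by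
    rw [lintegral_eq_lintegral_meas_lt μ (ae_of_all _ hg_nonneg) hg.measurable.aemeasurable,
      lintegral_eq_lintegral_meas_lt ν (ae_of_all _ hg_nonneg) hg.measurable.aemeasurable]
    refine lintegral_mono fun t => ?_
    exact IsUpperSet.measure_le_of_forall_measure_Iic_le h fun a b hab ha => ha.trans_le (hg hab)
  rw [integral_eq_lintegral_of_nonneg_ae (ae_of_all _ hg_nonneg)
      hg.measurable.aestronglyMeasurable,
    integral_eq_lintegral_of_nonneg_ae (ae_of_all _ hg_nonneg) hg.measurable.aestronglyMeasurable]
  exact ENNReal.toReal_mono hg_int.lintegral_lt_top.ne hlayer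

end CDFComparison

section StOrder

variable {μ ν : Measure ℝ} [IsProbabilityMeasure μ] [IsProbabilityMeasure ν]

theorem stOrder_of_forall_measure_Iic_le (h : ∀ x, ν (Iic x) ≤ μ (Iic x)) : StOrder μ ν := by
  rintro f hf ⟨C, hC⟩
  have hf_int : ∀ (κ : Measure ℝ) [IsProbabilityMeasure κ], Integrable f κ := fun κ _ =>
    .of_bound hf.measurable.aestronglyMeasurable C (ae_of_all _ hC)
  have hshift : ∫ x, f x + C ∂μ ≤ ∫ x, f x + C ∂ν :=
    integral_le_integral_of_forall_measure_Iic_le h (hf.add_const C)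
      (fun x => by linarith [neg_abs_le (f x), hC x]) (C := 2 * C)
      (fun x => by linarith [le_abs_self (f x), hC x])
  rw [integral_add (hf_int μ) (integrable_const C),
    integral_add (hf_int ν) (integrable_const C)] at hshift
  simpa using hshift

theorem measure_Iic_le_of_stOrder (h : StOrder μ ν) (x : ℝ) : ν (Iic x) ≤ μ (Iic x) := by
  have hmono : Monotone ((Ioi x).indicator (1 : ℝ → ℝ)) := fun a b hab => by
    by_cases ha : a ∈ Ioi x
    · rw [indicator_of_mem ha, indicator_of_mem (mem_Ioi.2 (lt_of_lt_of_le ha hab))]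
      exact le_rfl
    · rw [indicator_of_notMem ha]
      exact indicator_nonneg (fun _ _ => zero_le_one) b
  have hbdd : ∃ C, ∀ y, |(Ioi x).indicator (1 : ℝ → ℝ) y| ≤ C :=
    ⟨1, fun y => by by_cases hy : y ∈ Ioi x <;> simp [hy]⟩
  have hIoi := h _ hmono hbdd
  rw [integral_indicator_one measurableSet_Ioi, integral_indicator_one measurableSet_Ioi,
    measureReal_def, measureReal_def,
    ENNReal.toReal_le_toReal (measure_ne_top _ _) (measure_ne_top _ _)] at hIoi
  rw [← compl_Ioi, prob_compl_eq_one_sub measurableSet_Ioi, prob_compl_eq_one_sub measurableSet_Ioi]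
  exact tsub_le_tsub_left hIoi 1

theorem stOrder_iff_forall_measure_Iic_le : StOrder μ ν ↔ ∀ x, ν (Iic x) ≤ μ (Iic x) :=
  ⟨measure_Iic_le_of_stOrder, stOrder_of_forall_measure_Iic_le⟩

end StOrder

namespace StieltjesFunction

variable {R : Type*} [LinearOrder R] [TopologicalSpace R]

instance : Min (StieltjesFunction R) where
  min f g :=
    { toFun := fun x => min (f x) (g x)
      mono' := f.mono.min g.mono
      right_continuous' := fun x => (f.right_continuous x).min (g.right_continuous x) }

instance : Max (StieltjesFunction R) where
  max f g :=
    { toFun := fun x => max (f x) (g x)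
      mono' := f.mono.max g.mono
      right_continuous' := fun x => (f.right_continuous x).max (g.right_continuous x) }

@[simp]
theorem min_apply (f g : StieltjesFunction R) (x : R) : (min f g) x = min (f x) (g x) := rfl

theorem min_add_max (f g : StieltjesFunction R) : min f g + max f g = f + g :=
  ext fun x => _root_.min_add_max (f x) (g x)

theorem measure_min_le_add [OrderTopology R] [CompactIccSpace R] [MeasurableSpace R]
    [BorelSpace R] [SecondCountableTopology R] [DenselyOrdered R] (f g : StieltjesFunction R) :
    (min f g).measure ≤ f.measure + g.measure := by
  rw [← measure_add, ← min_add_max, measure_add]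
  exact Measure.le_add_right le_rfl

end StieltjesFunction

def stSup (μ₁ μ₂ : Measure ℝ) : Measure ℝ := (min (cdf μ₁) (cdf μ₂)).measure

section StSup

variable {μ₁ μ₂ : Measure ℝ}

theorem tendsto_min_cdf_atBot : Tendsto ⇑(min (cdf μ₁) (cdf μ₂)) atBot (𝓝 0) := by
  show Tendsto (fun x => min (cdf μ₁ x) (cdf μ₂ x)) atBot (𝓝 0)
  simpa using (tendsto_cdf_atBot μ₁).min (tendsto_cdf_atBot μ₂)

theorem tendsto_min_cdf_atTop : Tendsto ⇑(min (cdf μ₁) (cdf μ₂)) atTop (𝓝 1) := by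
  show Tendsto (fun x => min (cdf μ₁ x) (cdf μ₂ x)) atTop (𝓝 1)
  simpa using (tendsto_cdf_atTop μ₁).min (tendsto_cdf_atTop μ₂)

variable [IsProbabilityMeasure μ₁] [IsProbabilityMeasure μ₂]

instance : IsProbabilityMeasure (stSup μ₁ μ₂) :=
  StieltjesFunction.isProbabilityMeasure _ tendsto_min_cdf_atBot tendsto_min_cdf_atTop

theorem stSup_Iic (x : ℝ) : stSup μ₁ μ₂ (Iic x) = min (μ₁ (Iic x)) (μ₂ (Iic x)) := by
  rw [stSup, StieltjesFunction.measure_Iic _ tendsto_min_cdf_atBot, sub_zero,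
    StieltjesFunction.min_apply, ENNReal.ofReal_min, ofReal_cdf, ofReal_cdf]

theorem stSup_le_add : stSup μ₁ μ₂ ≤ μ₁ + μ₂ :=
  calc stSup μ₁ μ₂ ≤ (cdf μ₁).measure + (cdf μ₂).measure :=
        StieltjesFunction.measure_min_le_add (cdf μ₁) (cdf μ₂)
    _ = μ₁ + μ₂ := by rw [measure_cdf, measure_cdf]

end StSup

theorem stSup_mem_P2 {μ₁ μ₂ : Measure ℝ} (h₁ : μ₁ ∈ P2) (h₂ : μ₂ ∈ P2) : stSup μ₁ μ₂ ∈ P2 := by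
  have := h₁.1
  have := h₂.1
  exact ⟨inferInstance, (h₁.2.add_measure h₂.2).mono_measure stSup_le_add⟩

/-- Any two measures in `𝒫₂(ℝ)` have a least upper bound for the
stochastic order, namely the measure whose CDF is `min (F_{μ₁}, F_{μ₂})`. -/
theorem stochastic_order_lub (μ₁ μ₂ : Measure ℝ) (h₁ : μ₁ ∈ P2) (h₂ : μ₂ ∈ P2) :
    ∃ ν ∈ P2, (∀ x : ℝ, ν (Set.Iic x) = min (μ₁ (Set.Iic x)) (μ₂ (Set.Iic x))) ∧
      StOrder μ₁ ν ∧ StOrder μ₂ ν ∧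
      ∀ ρ ∈ P2, StOrder μ₁ ρ → StOrder μ₂ ρ → StOrder ν ρ := by
  have := h₁.1
  have := h₂.1
  refine ⟨stSup μ₁ μ₂, stSup_mem_P2 h₁ h₂, stSup_Iic, ?_, ?_, ?_⟩
  · exact stOrder_iff_forall_measure_Iic_le.2 fun x => (stSup_Iic x).trans_le (min_le_left _ _)
  · exact stOrder_iff_forall_measure_Iic_le.2 fun x => (stSup_Iic x).trans_le (min_le_right _ _)
  · rintro ρ ⟨hρ, -⟩ h₁ρ h₂ρ
    refine stOrder_iff_forall_measure_Iic_le.2 fun x => ?_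
    rw [stSup_Iic]
    exact le_min (stOrder_iff_forall_measure_Iic_le.1 h₁ρ x)
      (stOrder_iff_forall_measure_Iic_le.1 h₂ρ x)
end
end

section
/- A family M of probability measures in 𝒫₂(ℝ) is bounded from above with respect to the stochastic order (i.e., there exists ν ∈ 𝒫₂(ℝ) with μ ≤_st ν for all μ ∈ M) if and only if ∫₀^∞ (sup_{μ∈M} μ((u,∞))) · u du < ∞. -/
/-!
Testing `StOrder` against indicators of half-lines and, conversely, writing `∫ g` for monotone
`g ≥ 0` as `∫₀^∞ μ {g > t} dt`, where each `{g > t}` is an upper set, hence a half-line, shows that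
for probability measures `μ ≤_st ν` iff `μ (u, ∞) ≤ ν (u, ∞)` for all `u`. The layer-cake formula
`∫₀^∞ ν (u, ∞) u du = ∫ (x⁺)² / 2 dν` then gives necessity. Conversely, the supremum `T` of the
tails of `M ∪ {δ₀}` is antitone, right-continuous, equal to `1` on `(-∞, 0)`, and tends to `0` at
`∞` because `∫₀^∞ T(u) u du < ∞`; so `1 - T` is the distribution function of a probability measure
`ν` on `[0, ∞)`, which dominates `M` and has finite second moment by the layer-cake formula.
-/

open MeasureTheory Filter Set

noncomputable section

open ProbabilityTheory
open scoped ENNReal Topology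

theorem iUnion_Iic_sub_one_div_eq_Iio (a : ℝ) : ⋃ n : ℕ, Iic (a - 1 / (n + 1)) = Iio a :=
  iUnion_Iic_eq_Iio_of_lt_of_tendsto (fun _ => sub_lt_self a (by positivity)) <| by
    simpa using
      (tendsto_const_nhds (x := a)).sub (tendsto_one_div_add_atTop_nhds_zero_nat (𝕜 := ℝ))

section StochasticOrder

variable {μ ν : Measure ℝ}

theorem StOrder.measure_Ioi_le [IsFiniteMeasure μ] [IsFiniteMeasure ν] (h : StOrder μ ν)
    (u : ℝ) : μ (Ioi u) ≤ ν (Ioi u) := by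
  have hmono : Monotone ((Ioi u).indicator (1 : ℝ → ℝ)) := fun a b hab => by
    by_cases ha : a ∈ Ioi u
    · rw [indicator_of_mem ha, indicator_of_mem (isUpperSet_Ioi u hab ha)]
      exact le_rfl
    · rw [indicator_of_notMem ha]
      exact indicator_nonneg (fun _ _ => zero_le_one) b
  have hbdd : ∀ x, |(Ioi u).indicator (1 : ℝ → ℝ) x| ≤ 1 := fun x => by
    by_cases hx : x ∈ Ioi u <;> simp [hx]
  have key := h _ hmono ⟨1, hbdd⟩
  rw [integral_indicator_one measurableSet_Ioi, integral_indicator_one measurableSet_Ioi] at key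
  exact (ENNReal.toReal_le_toReal (measure_ne_top _ _) (measure_ne_top _ _)).1 key

theorem measure_Ici_le_of_measure_Ioi_le [IsFiniteMeasure μ] [IsFiniteMeasure ν]
    (h : ∀ u, μ (Ioi u) ≤ ν (Ioi u)) (a : ℝ) : μ (Ici a) ≤ ν (Ici a) := by
  have hIci : ⋂ n : ℕ, Ioi (a - 1 / (n + 1)) = Ici a := by
    simp_rw [← compl_Iio, ← iUnion_Iic_sub_one_div_eq_Iio, compl_iUnion, compl_Iic]
  have hlim (ρ : Measure ℝ) [IsFiniteMeasure ρ] :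
      Tendsto (fun n : ℕ => ρ (Ioi (a - 1 / (n + 1)))) atTop (𝓝 (ρ (Ici a))) :=
    hIci ▸ tendsto_measure_iInter_atTop (fun _ => measurableSet_Ioi.nullMeasurableSet)
      (fun m n hmn => Ioi_subset_Ioi (by gcongr)) ⟨0, measure_ne_top _ _⟩
  exact le_of_tendsto_of_tendsto' (hlim μ) (hlim ν) fun n => h _

theorem IsUpperSet.measure_le_of_measure_Ioi_le [IsFiniteMeasure μ] [IsFiniteMeasure ν]
    (h : ∀ u, μ (Ioi u) ≤ ν (Ioi u)) {s : Set ℝ} (hs : IsUpperSet s) : μ s ≤ ν s := by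
  rcases s.eq_empty_or_nonempty with rfl | hne
  · simp
  by_cases hbdd : BddBelow s
  · have hglb := isGLB_csInf hne hbdd
    have hs_eq : s = ⋃ x ∈ s, Ici x :=
      (Subset.antisymm (fun x hx => mem_biUnion hx self_mem_Ici)
        (iUnion₂_subset fun x hx => isUpperSet_iff_Ici_subset.1 hs hx))
    by_cases hmem : sInf s ∈ s
    · rw [hs_eq, hglb.biUnion_Ici_eq_Ici hmem]
      exact measure_Ici_le_of_measure_Ioi_le h _
    · rw [hs_eq, hglb.biUnion_Ici_eq_Ioi hmem]
      exact h _
  · have hs_univ : s = univ := eq_univ_of_forall fun x =>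
      let ⟨_, hy, hyx⟩ := not_bddBelow_iff.1 hbdd x
      hs hyx.le hy
    rw [hs_univ]
    exact le_of_tendsto_of_tendsto' (tendsto_measure_Ici_atBot μ) (tendsto_measure_Ici_atBot ν)
      (measure_Ici_le_of_measure_Ioi_le h)

theorem integral_le_integral_of_measure_Ioi_le [IsFiniteMeasure μ] [IsFiniteMeasure ν]
    (h : ∀ u, μ (Ioi u) ≤ ν (Ioi u)) {g : ℝ → ℝ} (hg : Monotone g) (hg0 : 0 ≤ g)
    (hgν : Integrable g ν) : ∫ x, g x ∂μ ≤ ∫ x, g x ∂ν := by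
  have hgm := hg.measurable
  rw [integral_eq_lintegral_of_nonneg_ae (.of_forall hg0) hgm.aestronglyMeasurable,
    integral_eq_lintegral_of_nonneg_ae (.of_forall hg0) hgm.aestronglyMeasurable]
  refine ENNReal.toReal_mono ((lintegral_ofReal_ne_top_iff_integrable hgm.aestronglyMeasurable
    (.of_forall hg0)).2 hgν) ?_
  rw [lintegral_eq_lintegral_meas_lt μ (.of_forall hg0) hgm.aemeasurable,
    lintegral_eq_lintegral_meas_lt ν (.of_forall hg0) hgm.aemeasurable]
  exact lintegral_mono fun t => ((isUpperSet_Ioi t).preimage hg).measure_le_of_measure_Ioi_le h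

theorem stOrder_iff_measure_Ioi_le [IsProbabilityMeasure μ] [IsProbabilityMeasure ν] :
    StOrder μ ν ↔ ∀ u, μ (Ioi u) ≤ ν (Ioi u) := by
  refine ⟨StOrder.measure_Ioi_le, fun h f hf ⟨C, hC⟩ => ?_⟩
  have hf_int (ρ : Measure ℝ) [IsFiniteMeasure ρ] : Integrable f ρ :=
    .of_bound hf.measurable.aestronglyMeasurable C (.of_forall hC)
  have key := integral_le_integral_of_measure_Ioi_le h (g := fun x => f x + C)
    (fun a b hab => by simpa using hf hab)
    (fun x => neg_le_iff_add_nonneg.1 ((neg_le_neg (hC x)).trans (neg_abs_le _)))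
    ((hf_int ν).add (integrable_const C))
  simpa [integral_add (hf_int μ) (integrable_const C),
    integral_add (hf_int ν) (integrable_const C)] using key

end StochasticOrder

theorem lintegral_measure_Ioi_mul_eq (ν : Measure ℝ) :
    ∫⁻ u in Ioi (0 : ℝ), ν (Ioi u) * ENNReal.ofReal u =
      ∫⁻ x, ENNReal.ofReal (max x 0 ^ 2 / 2) ∂ν := by
  have hlayer :=
    lintegral_comp_eq_lintegral_meas_lt_mul ν (f := fun x => max x 0) (g := fun t => t)
    (.of_forall fun x => le_max_right x 0) (measurable_id.max measurable_const).aemeasurable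
    (fun _ _ => intervalIntegral.intervalIntegrable_id)
    (ae_restrict_of_forall_mem measurableSet_Ioi fun _ h => le_of_lt h)
  beta_reduce at hlayer
  have hset (u : ℝ) (hu : 0 < u) : {x : ℝ | u < max x 0} = Ioi u := by
    ext x; simp [hu.not_gt]
  calc _ = ∫⁻ u in Ioi (0 : ℝ), ν {x | u < max x 0} * ENNReal.ofReal u :=
        setLIntegral_congr_fun measurableSet_Ioi fun u hu => by rw [hset u hu]
    _ = _ := by rw [← hlayer]; simp [integral_id]

theorem lintegral_measure_Ioi_mul_lt_top {ν : Measure ℝ}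
    (h : Integrable (fun x : ℝ => x ^ 2) ν) :
    ∫⁻ u in Ioi (0 : ℝ), ν (Ioi u) * ENNReal.ofReal u < ⊤ := by
  rw [lintegral_measure_Ioi_mul_eq]
  refine lt_of_le_of_lt (lintegral_mono fun x => ENNReal.ofReal_le_ofReal ?_) h.lintegral_lt_top
  rcases le_total x 0 with hx | hx <;> simp [hx]
  nlinarith

theorem integrable_sq_of_lintegral_measure_Ioi_mul_lt_top {ν : Measure ℝ} (h0 : ν (Iio 0) = 0)
    (h : ∫⁻ u in Ioi (0 : ℝ), ν (Ioi u) * ENNReal.ofReal u < ⊤) :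
    Integrable (fun x : ℝ => x ^ 2) ν := by
  rw [lintegral_measure_Ioi_mul_eq] at h
  have hnonneg : ∀ᵐ x ∂ν, 0 ≤ x := by
    rw [ae_iff]; simp only [not_le]; exact h0
  have hsq : (fun x : ℝ => ENNReal.ofReal (x ^ 2)) =ᵐ[ν]
      fun x => 2 * ENNReal.ofReal (max x 0 ^ 2 / 2) := by
    filter_upwards [hnonneg] with x hx
    rw [max_eq_left hx, ← ENNReal.ofReal_ofNat 2, ← ENNReal.ofReal_mul zero_le_two]
    ring_nf
  refine (lintegral_ofReal_ne_top_iff_integrable (by fun_prop)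
    (.of_forall fun x => sq_nonneg x)).1 ?_
  rw [lintegral_congr_ae hsq, lintegral_const_mul _ (by fun_prop)]
  exact ENNReal.mul_ne_top ENNReal.ofNat_ne_top h.ne

theorem continuousWithinAt_measure_Ioi (μ : Measure ℝ) [IsProbabilityMeasure μ] (x : ℝ) :
    ContinuousWithinAt (fun u => μ (Ioi u)) (Ici x) x := by
  have htail (u : ℝ) : μ (Ioi u) = ENNReal.ofReal (1 - cdf μ u) := by
    conv_lhs => rw [← measure_cdf μ, (cdf μ).measure_Ioi (tendsto_cdf_atTop μ)]
  simp_rw [htail]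
  exact ENNReal.continuous_ofReal.continuousAt.comp_continuousWithinAt
    (((cdf μ).right_continuous x).const_sub 1)

def supTail (M : Set (Measure ℝ)) (u : ℝ) : ℝ≥0∞ := ⨆ μ ∈ M, μ (Ioi u)

section SupTail

variable {M : Set (Measure ℝ)}

theorem antitone_supTail (M : Set (Measure ℝ)) : Antitone (supTail M) := fun _ _ hab =>
  iSup₂_mono fun _ _ => measure_mono (Ioi_subset_Ioi hab)

theorem supTail_le_one (hM : ∀ μ ∈ M, IsProbabilityMeasure μ) (u : ℝ) : supTail M u ≤ 1 :=
  iSup₂_le fun μ hμ => have := hM μ hμ; prob_le_one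

theorem continuousWithinAt_supTail (hM : ∀ μ ∈ M, IsProbabilityMeasure μ) (x : ℝ) :
    ContinuousWithinAt (supTail M) (Ici x) x := by
  -- The right limit of an antitone function is the supremum of its values on `(x, ∞)`, and each
  -- tail `μ (Ioi ·)` is right-continuous, so this supremum reaches every `μ (Ioi x)`.
  rw [← continuousWithinAt_Ioi_iff_Ici]
  have hlim := (antitone_supTail M).tendsto_nhdsGT x
  suffices supTail M x = sSup (supTail M '' Ioi x) by rwa [← this] at hlim
  refine le_antisymm (iSup₂_le fun μ hμ => ?_) (sSup_le (forall_mem_image.2 fun y hy =>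
    antitone_supTail M hy.le))
  have := hM μ hμ
  have hμ_cont : Tendsto (fun u => μ (Ioi u)) (𝓝[>] x) (𝓝 (μ (Ioi x))) :=
    continuousWithinAt_Ioi_iff_Ici.2 (continuousWithinAt_measure_Ioi μ x)
  refine le_of_tendsto hμ_cont (eventually_nhdsWithin_of_forall fun y hy => ?_)
  exact (le_biSup (fun ν : Measure ℝ => ν (Ioi y)) hμ).trans (le_sSup (mem_image_of_mem _ hy))

theorem supTail_insert (μ : Measure ℝ) (M : Set (Measure ℝ)) (u : ℝ) :
    supTail (insert μ M) u = μ (Ioi u) ⊔ supTail M u :=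
  iSup_insert

end SupTail

theorem tendsto_atTop_zero_of_lintegral_mul_lt_top {S : ℝ → ℝ≥0∞} (hS : Antitone S)
    (h : ∫⁻ u in Ioi (0 : ℝ), S u * ENNReal.ofReal u < ⊤) : Tendsto S atTop (𝓝 0) := by
  suffices hinf : ⨅ u, S u = 0 from hinf ▸ tendsto_atTop_iInf hS
  by_contra hinf
  have hvol : ∫⁻ u in Ioi (0 : ℝ), ENNReal.ofReal u = ⊤ := by
    refine top_unique ?_
    calc ⊤ = ∫⁻ _ in Ioi (1 : ℝ), 1 := by simp
      _ ≤ ∫⁻ u in Ioi (1 : ℝ), ENNReal.ofReal u :=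
          setLIntegral_mono (by fun_prop) fun u hu => ENNReal.one_le_ofReal.2 (le_of_lt hu)
      _ ≤ ∫⁻ u in Ioi (0 : ℝ), ENNReal.ofReal u :=
          lintegral_mono_set (Ioi_subset_Ioi zero_le_one)
  have hle : (⨅ v, S v) * ∫⁻ u in Ioi (0 : ℝ), ENNReal.ofReal u ≤
      ∫⁻ u in Ioi (0 : ℝ), S u * ENNReal.ofReal u := by
    rw [← lintegral_const_mul _ (by fun_prop)]
    exact lintegral_mono fun u => mul_le_mul_left (iInf_le S u) _
  rw [hvol, ENNReal.mul_top hinf] at hle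
  exact (lt_of_le_of_lt hle h).false

theorem exists_isProbabilityMeasure_measure_Ioi_eq {T : ℝ → ℝ≥0∞} (hT : Antitone T)
    (hT_cont : ∀ x, ContinuousWithinAt T (Ici x) x) (hT_bot : Tendsto T atBot (𝓝 1))
    (hT_top : Tendsto T atTop (𝓝 0)) :
    ∃ ν : Measure ℝ, IsProbabilityMeasure ν ∧ ∀ u, ν (Ioi u) = T u := by
  have hT_ne_top (u : ℝ) : T u ≠ ⊤ :=
    ne_top_of_le_ne_top ENNReal.one_ne_top (hT.ge_of_tendsto hT_bot u)
  let F : StieltjesFunction ℝ :=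
    { toFun := fun u => 1 - (T u).toReal
      mono' := fun a b hab => sub_le_sub_left (ENNReal.toReal_mono (hT_ne_top a) (hT hab)) 1
      right_continuous' := fun x =>
        ((ENNReal.continuousAt_toReal (hT_ne_top x)).comp_continuousWithinAt
          (hT_cont x)).const_sub 1 }
  have hF_bot : Tendsto F atBot (𝓝 0) := by
    simpa using ((ENNReal.tendsto_toReal ENNReal.one_ne_top).comp hT_bot).const_sub 1
  have hF_top : Tendsto F atTop (𝓝 1) := by
    simpa using ((ENNReal.tendsto_toReal ENNReal.zero_ne_top).comp hT_top).const_sub 1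
  refine ⟨F.measure, F.isProbabilityMeasure hF_bot hF_top, fun u => ?_⟩
  rw [F.measure_Ioi hF_top]
  simp [F, hT_ne_top u]

theorem measure_Iio_eq_zero_of_measure_Ioi_eq_one {ν : Measure ℝ} [IsProbabilityMeasure ν]
    {a : ℝ} (h : ∀ u < a, ν (Ioi u) = 1) : ν (Iio a) = 0 := by
  rw [← iUnion_Iic_sub_one_div_eq_Iio, measure_iUnion_null_iff]
  intro n
  rw [← compl_Ioi, prob_compl_eq_zero_iff measurableSet_Ioi]
  exact h _ (sub_lt_self a (by positivity))

theorem exists_upperBound_of_lintegral_supTail_lt_top {M : Set (Measure ℝ)}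
    (hM : ∀ μ ∈ M, IsProbabilityMeasure μ)
    (h : ∫⁻ u in Ioi (0 : ℝ), supTail M u * ENNReal.ofReal u < ⊤) :
    ∃ ν : Measure ℝ, IsProbabilityMeasure ν ∧ (∀ u < 0, ν (Ioi u) = 1) ∧
      ∀ u, 0 ≤ u → ν (Ioi u) = supTail M u := by
  set T := supTail (insert (Measure.dirac 0) M) with hT
  have hM_dirac : ∀ μ ∈ insert (Measure.dirac 0) M, IsProbabilityMeasure μ :=
    forall_mem_insert.2 ⟨inferInstance, hM⟩
  have hT_neg (u : ℝ) (hu : u < 0) : T u = 1 := by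
    refine le_antisymm (supTail_le_one hM_dirac u) ?_
    rw [hT, supTail_insert, Measure.dirac_apply_of_mem (show (0 : ℝ) ∈ Ioi u from hu)]
    exact le_sup_left
  have hT_nonneg (u : ℝ) (hu : 0 ≤ u) : T u = supTail M u := by
    rw [hT, supTail_insert, Measure.dirac_apply' _ measurableSet_Ioi,
      indicator_of_notMem (show (0 : ℝ) ∉ Ioi u from not_lt.2 hu), zero_max]
  have hT_bot : Tendsto T atBot (𝓝 1) :=
    tendsto_const_nhds.congr' ((eventually_lt_atBot 0).mono fun u hu => (hT_neg u hu).symm)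
  have hT_top : Tendsto T atTop (𝓝 0) := by
    refine tendsto_atTop_zero_of_lintegral_mul_lt_top (antitone_supTail _) ?_
    rwa [setLIntegral_congr_fun measurableSet_Ioi fun u hu => by rw [hT_nonneg u (le_of_lt hu)]]
  obtain ⟨ν, hν, hνT⟩ := exists_isProbabilityMeasure_measure_Ioi_eq (antitone_supTail _)
    (continuousWithinAt_supTail hM_dirac) hT_bot hT_top
  exact ⟨ν, hν, fun u hu => (hνT u).trans (hT_neg u hu),
    fun u hu => (hνT u).trans (hT_nonneg u hu)⟩

/-- A family `M ⊆ 𝒫₂(ℝ)` is bounded from above for the stochastic order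
iff `∫₀^∞ (sup_{μ∈M} μ((u,∞))) · u du < ∞`. -/
theorem bounded_above_iff_tail_integral (M : Set (Measure ℝ)) (hM : M ⊆ P2) :
    (∃ ν ∈ P2, ∀ μ ∈ M, StOrder μ ν) ↔
      (∫⁻ u in Set.Ioi (0:ℝ), (⨆ μ ∈ M, μ (Set.Ioi u)) * ENNReal.ofReal u) < ⊤ := by
  have hM_prob (μ : Measure ℝ) (hμ : μ ∈ M) : IsProbabilityMeasure μ := (hM hμ).1
  change _ ↔ ∫⁻ u in Ioi (0 : ℝ), supTail M u * ENNReal.ofReal u < ⊤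
  constructor
  · rintro ⟨ν, ⟨hν, hν_sq⟩, hMν⟩
    have hle (u : ℝ) : supTail M u ≤ ν (Ioi u) := iSup₂_le fun μ hμ =>
      have := hM_prob μ hμ
      stOrder_iff_measure_Ioi_le.1 (hMν μ hμ) u
    calc _ ≤ ∫⁻ u in Ioi (0 : ℝ), ν (Ioi u) * ENNReal.ofReal u :=
          lintegral_mono fun u => mul_le_mul_left (hle u) _
      _ < ⊤ := lintegral_measure_Ioi_mul_lt_top hν_sq
  · intro h
    obtain ⟨ν, hν, hν_neg, hν_nonneg⟩ := exists_upperBound_of_lintegral_supTail_lt_top hM_prob h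
    have hν_tail : ∫⁻ u in Ioi (0 : ℝ), ν (Ioi u) * ENNReal.ofReal u < ⊤ := by
      rwa [setLIntegral_congr_fun measurableSet_Ioi fun u hu => by rw [hν_nonneg u (le_of_lt hu)]]
    refine ⟨ν, ⟨hν, integrable_sq_of_lintegral_measure_Ioi_mul_lt_top
      (measure_Iio_eq_zero_of_measure_Ioi_eq_one hν_neg) hν_tail⟩, fun μ hμ => ?_⟩
    have := hM_prob μ hμ
    refine stOrder_iff_measure_Ioi_le.2 fun u => ?_
    rcases lt_or_ge u 0 with hu | hu
    · exact (hν_neg u hu).symm ▸ prob_le_one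
    · exact (hν_nonneg u hu).symm ▸ le_biSup (fun μ : Measure ℝ => μ (Ioi u)) hμ
end
end

section
/- A family M of probability measures in 𝒫₂(ℝ) is bounded from below with respect to the stochastic order (i.e., there exists ν ∈ 𝒫₂(ℝ) with ν ≤_st μ for all μ ∈ M) if and only if ∫₀^∞ (sup_{μ∈M} μ((-∞,-u])) · u du < ∞. -/
open MeasureTheory Filter Set

noncomputable section

open scoped ENNReal Topology

/-!
For probability measures, `ν ≤_st μ` is equivalent to `F_μ ≤ F_ν` pointwise: test against the
indicators of half-lines in one direction; in the other, use the layer-cake formula, whose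
superlevel sets are upper sets, i.e. half-lines. By the layer-cake formula again,
`∫₀^∞ ν((-∞,-u]) u du = ½ ∫ (x⁻)² dν`, which is finite for `ν ∈ 𝒫₂(ℝ)`; since every lower bound
has CDF above `G(x) = sup_{μ ∈ M} F_μ(x)`, this gives one direction. Conversely, if
`∫₀^∞ G(-u) u du < ∞` then `G → 0` at `-∞`, and the right-continuous regularization of
`max(G, 1_{[0,∞)})` is the CDF of a probability measure on `(-∞, 0]` that dominates `M` and
whose CDF agrees with `G` off a countable set on `(-∞, 0)`, so its second moment is finite.
-/

theorem IsUpperSet.monotone_indicator_one {α : Type*} [Preorder α] {s : Set α}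
    (hs : IsUpperSet s) : Monotone (s.indicator (1 : α → ℝ)) := fun a b hab ↦ by
  by_cases ha : a ∈ s
  · simp [ha, hs hab ha]
  · simp only [indicator_of_notMem ha]
    exact indicator_nonneg (fun _ _ ↦ zero_le_one) b

theorem IsUpperSet.eq_Ioi_or_eq_Ici {α : Type*} [ConditionallyCompleteLinearOrder α] {s : Set α}
    (hs : IsUpperSet s) (hne : s.Nonempty) (hbdd : BddBelow s) :
    s = Ioi (sInf s) ∨ s = Ici (sInf s) := by
  have hIoi : Ioi (sInf s) ⊆ s := fun y hy ↦ by
    obtain ⟨x, hx, hxy⟩ := (csInf_lt_iff hbdd hne).1 hy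
    exact hs hxy.le hx
  have hIci : s ⊆ Ici (sInf s) := fun x hx ↦ csInf_le hbdd hx
  by_cases hmem : sInf s ∈ s
  · exact Or.inr (hIci.antisymm fun y hy ↦ hs hy hmem)
  · refine Or.inl (Subset.antisymm (fun x hx ↦ ?_) hIoi)
    exact (hIci hx).lt_of_ne' fun h ↦ hmem (h ▸ hx)

theorem IsUpperSet.eq_univ_of_not_bddBelow {α : Type*} [LinearOrder α] {s : Set α}
    (hs : IsUpperSet s) (hbdd : ¬BddBelow s) : s = univ :=
  eq_univ_of_forall fun x ↦ by
    obtain ⟨y, hy, hyx⟩ := not_bddBelow_iff.1 hbdd x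
    exact hs hyx.le hy

section CdfOrder

variable {μ ν : Measure ℝ} [IsProbabilityMeasure μ] [IsProbabilityMeasure ν]

theorem StOrder.measure_Iic_le (h : StOrder ν μ) (x : ℝ) : μ (Iic x) ≤ ν (Iic x) := by
  have hIoi := h _ (isUpperSet_Ioi x).monotone_indicator_one
    ⟨1, fun y ↦ by by_cases hy : y ∈ Ioi x <;> simp [hy]⟩
  rw [integral_indicator_one measurableSet_Ioi, integral_indicator_one measurableSet_Ioi,
    measureReal_def, measureReal_def, ENNReal.toReal_le_toReal (by simp) (by simp)] at hIoi
  rw [← compl_Ioi, prob_compl_eq_one_sub measurableSet_Ioi, prob_compl_eq_one_sub measurableSet_Ioi]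
  exact tsub_le_tsub_left hIoi 1

theorem measure_Iio_le_of_measure_Iic_le (h : ∀ x, μ (Iic x) ≤ ν (Iic x)) (x : ℝ) :
    μ (Iio x) ≤ ν (Iio x) := by
  rw [← ProbabilityTheory.measure_cdf μ, ← ProbabilityTheory.measure_cdf ν,
    StieltjesFunction.measure_Iio _ (ProbabilityTheory.tendsto_cdf_atBot μ),
    StieltjesFunction.measure_Iio _ (ProbabilityTheory.tendsto_cdf_atBot ν)]
  refine ENNReal.ofReal_le_ofReal (sub_le_sub_right ?_ 0)
  refine le_of_tendsto_of_tendsto' ((ProbabilityTheory.cdf μ).mono.tendsto_leftLim x)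
    ((ProbabilityTheory.cdf ν).mono.tendsto_leftLim x) fun y ↦ ?_
  simp only [ProbabilityTheory.cdf_eq_real, measureReal_def]
  exact ENNReal.toReal_mono (by simp) (h y)

theorem measure_le_of_isUpperSet_of_measure_Iic_le (h : ∀ x, μ (Iic x) ≤ ν (Iic x)) {s : Set ℝ}
    (hs : IsUpperSet s) : ν s ≤ μ s := by
  rcases s.eq_empty_or_nonempty with rfl | hne
  · simp
  by_cases hbdd : BddBelow s
  · rcases hs.eq_Ioi_or_eq_Ici hne hbdd with hs | hs <;> rw [hs]
    · rw [← compl_Iic, prob_compl_eq_one_sub measurableSet_Iic,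
        prob_compl_eq_one_sub measurableSet_Iic]
      exact tsub_le_tsub_left (h _) 1
    · rw [← compl_Iio, prob_compl_eq_one_sub measurableSet_Iio,
        prob_compl_eq_one_sub measurableSet_Iio]
      exact tsub_le_tsub_left (measure_Iio_le_of_measure_Iic_le h _) 1
  · simp [hs.eq_univ_of_not_bddBelow hbdd]

theorem stOrder_of_measure_Iic_le (h : ∀ x, μ (Iic x) ≤ ν (Iic x)) : StOrder ν μ := by
  rintro f hf ⟨C, hC⟩
  have hfC : ∀ x, 0 ≤ f x + C := fun x ↦ by linarith [(abs_le.1 (hC x)).1]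
  have hintf : ∀ ρ : Measure ℝ, [IsProbabilityMeasure ρ] → Integrable f ρ :=
    fun ρ _ ↦ .of_bound hf.measurable.aestronglyMeasurable C
      (ae_of_all _ fun x ↦ (Real.norm_eq_abs _).le.trans (hC x))
  have hint : ∀ ρ : Measure ℝ, [IsProbabilityMeasure ρ] → Integrable (fun x ↦ f x + C) ρ :=
    fun ρ _ ↦ (hintf ρ).add (integrable_const C)
  have hlayer : ∫⁻ x, ENNReal.ofReal (f x + C) ∂ν ≤ ∫⁻ x, ENNReal.ofReal (f x + C) ∂μ := by
    rw [lintegral_eq_lintegral_meas_lt ν (ae_of_all _ hfC) (hint ν).aemeasurable,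
      lintegral_eq_lintegral_meas_lt μ (ae_of_all _ hfC) (hint μ).aemeasurable]
    exact lintegral_mono fun t ↦ measure_le_of_isUpperSet_of_measure_Iic_le h
      fun a b hab (ha : t < f a + C) ↦ show t < f b + C by linarith [hf hab]
  have hreal := ENNReal.toReal_mono (hint μ).lintegral_lt_top.ne hlayer
  rw [← integral_eq_lintegral_of_nonneg_ae (ae_of_all _ hfC) (hint ν).aestronglyMeasurable,
    ← integral_eq_lintegral_of_nonneg_ae (ae_of_all _ hfC) (hint μ).aestronglyMeasurable,
    integral_add (hintf ν) (integrable_const C), integral_add (hintf μ) (integrable_const C)]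
    at hreal
  simp only [integral_const, probReal_univ, one_smul] at hreal
  linarith

end CdfOrder

namespace Monotone

variable {f : ℝ → ℝ} (hf : Monotone f)

theorem tendsto_stieltjesFunction_atBot {l : ℝ} (h : Tendsto f atBot (𝓝 l)) :
    Tendsto hf.stieltjesFunction atBot (𝓝 l) :=
  tendsto_of_tendsto_of_tendsto_of_le_of_le h
    (h.comp (tendsto_atBot_add_const_right _ 1 tendsto_id)) (fun _ ↦ hf.le_rightLim le_rfl)
    fun x ↦ hf.rightLim_le (lt_add_one x)

theorem tendsto_stieltjesFunction_atTop {l : ℝ} (h : Tendsto f atTop (𝓝 l)) :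
    Tendsto hf.stieltjesFunction atTop (𝓝 l) :=
  tendsto_of_tendsto_of_tendsto_of_le_of_le h
    (h.comp (tendsto_atTop_add_const_right _ 1 tendsto_id)) (fun _ ↦ hf.le_rightLim le_rfl)
    fun x ↦ hf.rightLim_le (lt_add_one x)

theorem countable_stieltjesFunction_ne : {x | hf.stieltjesFunction x ≠ f x}.Countable :=
  hf.countable_not_continuousAt.mono fun x (hx : _ ≠ _) (hcont : ContinuousAt f x) ↦
    hx ((hf.continuousWithinAt_Ioi_iff_rightLim_eq).1 hcont.continuousWithinAt)

end Monotone

def supCdf (M : Set (Measure ℝ)) (x : ℝ) : ℝ≥0∞ :=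
  ⨆ μ ∈ M, μ (Iic x)

section SupCdf

variable {M : Set (Measure ℝ)}

theorem monotone_supCdf : Monotone (supCdf M) := fun _ _ hxy ↦
  iSup₂_mono fun _ _ ↦ measure_mono (Iic_subset_Iic.2 hxy)

theorem measure_Iic_le_supCdf {μ : Measure ℝ} (hμ : μ ∈ M) (x : ℝ) : μ (Iic x) ≤ supCdf M x :=
  le_iSup₂ (f := fun μ _ ↦ μ (Iic x)) μ hμ

theorem supCdf_le_one (hM : ∀ μ ∈ M, IsProbabilityMeasure μ) (x : ℝ) : supCdf M x ≤ 1 :=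
  iSup₂_le fun μ hμ ↦ have := hM μ hμ; prob_le_one

theorem supCdf_insert (μ : Measure ℝ) (x : ℝ) :
    supCdf (insert μ M) x = μ (Iic x) ⊔ supCdf M x :=
  iSup_insert

theorem tendsto_supCdf_atTop (hM : ∀ μ ∈ M, IsProbabilityMeasure μ) (hne : M.Nonempty) :
    Tendsto (supCdf M) atTop (𝓝 1) := by
  obtain ⟨μ, hμ⟩ := hne
  have := hM μ hμ
  refine tendsto_of_tendsto_of_tendsto_of_le_of_le ?_ tendsto_const_nhds
    (measure_Iic_le_supCdf hμ) (supCdf_le_one hM)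
  simpa using tendsto_measure_Iic_atTop μ

theorem tendsto_supCdf_atBot (h : ∫⁻ u in Ioi 0, supCdf M (-u) * ENNReal.ofReal u < ⊤) :
    Tendsto (supCdf M) atBot (𝓝 0) := by
  convert tendsto_atBot_iInf monotone_supCdf
  set c := ⨅ x, supCdf M x
  -- a positive lower bound `c` would make the tail integral at least `c * ∫_1^∞ u du = ∞`
  have hc : c * ⊤ ≤ ∫⁻ u in Ioi 0, supCdf M (-u) * ENNReal.ofReal u :=
    calc c * ⊤ = ∫⁻ u in Ioi 1, c := by simp
      _ ≤ ∫⁻ u in Ioi 1, supCdf M (-u) * ENNReal.ofReal u :=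
        setLIntegral_mono' measurableSet_Ioi fun u (hu : 1 < u) ↦ by
          simpa using mul_le_mul' (iInf_le _ (-u)) (ENNReal.one_le_ofReal.2 hu.le)
      _ ≤ _ := lintegral_mono_set (Ioi_subset_Ioi zero_le_one)
  by_contra hc0
  exact (hc.trans_lt h).ne (ENNReal.mul_top (Ne.symm hc0))

end SupCdf

section Tail

theorem lintegral_measure_Iic_neg_mul_eq (ν : Measure ℝ) :
    ∫⁻ u in Ioi 0, ν (Iic (-u)) * ENNReal.ofReal u =
      ∫⁻ x, ENNReal.ofReal (max (-x) 0 ^ 2 / 2) ∂ν := by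
  have hcake := lintegral_comp_eq_lintegral_meas_le_mul ν (f := fun x ↦ max (-x) 0) (g := id)
    (ae_of_all _ fun _ ↦ le_max_right _ _) (by fun_prop)
    (fun _ _ ↦ intervalIntegral.intervalIntegrable_id)
    ((ae_restrict_mem measurableSet_Ioi).mono fun _ (ht : 0 < _) ↦ ht.le)
  simp only [id, integral_id, zero_pow two_ne_zero, sub_zero] at hcake
  rw [hcake]
  refine setLIntegral_congr_fun measurableSet_Ioi fun u hu ↦ ?_
  congr 2
  ext x
  simp [not_le.2 (mem_Ioi.1 hu), le_neg]

variable {ν : Measure ℝ}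

theorem lintegral_measure_Iic_neg_mul_lt_top (hν : Integrable (fun x : ℝ ↦ x ^ 2) ν) :
    ∫⁻ u in Ioi 0, ν (Iic (-u)) * ENNReal.ofReal u < ⊤ := by
  rw [lintegral_measure_Iic_neg_mul_eq]
  refine lt_of_le_of_lt (lintegral_mono fun x ↦ ENNReal.ofReal_le_ofReal ?_) hν.lintegral_lt_top
  rcases le_total x 0 with hx | hx
  · nlinarith [max_eq_left (neg_nonneg.2 hx)]
  · simp [max_eq_right (neg_nonpos.2 hx), sq_nonneg]

theorem integrable_sq_of_lintegral_measure_Iic_neg_mul_lt_top (hν : ∀ᵐ x ∂ν, x ≤ 0)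
    (h : ∫⁻ u in Ioi 0, ν (Iic (-u)) * ENNReal.ofReal u < ⊤) :
    Integrable (fun x : ℝ ↦ x ^ 2) ν := by
  refine ⟨by fun_prop, (hasFiniteIntegral_iff_ofReal (ae_of_all _ fun x ↦ sq_nonneg x)).2 ?_⟩
  rw [lintegral_measure_Iic_neg_mul_eq] at h
  calc ∫⁻ x, ENNReal.ofReal (x ^ 2) ∂ν
      = ∫⁻ x, 2 * ENNReal.ofReal (max (-x) 0 ^ 2 / 2) ∂ν := by
        refine lintegral_congr_ae (hν.mono fun x (hx : x ≤ 0) ↦ ?_)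
        dsimp only
        rw [max_eq_left (neg_nonneg.2 hx), ← ENNReal.ofReal_ofNat 2,
          ← ENNReal.ofReal_mul zero_le_two]
        ring_nf
    _ < ⊤ := by
        rw [lintegral_const_mul' _ _ ENNReal.ofNat_ne_top]
        exact ENNReal.mul_lt_top ENNReal.ofNat_lt_top h

end Tail

theorem exists_isProbabilityMeasure_measure_Iic_eq_supCdf {M : Set (Measure ℝ)}
    (hM : ∀ μ ∈ M, IsProbabilityMeasure μ) (hne : M.Nonempty)
    (hbot : Tendsto (supCdf M) atBot (𝓝 0)) :
    ∃ ν : Measure ℝ, IsProbabilityMeasure ν ∧ (∀ x, supCdf M x ≤ ν (Iic x)) ∧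
      {x | ν (Iic x) ≠ supCdf M x}.Countable := by
  have hfin : ∀ x, supCdf M x ≠ ⊤ := fun x ↦ ((supCdf_le_one hM x).trans_lt ENNReal.one_lt_top).ne
  set F : ℝ → ℝ := fun x ↦ (supCdf M x).toReal
  have hF : Monotone F := fun x y hxy ↦ ENNReal.toReal_mono (hfin y) (monotone_supCdf hxy)
  -- `F` need not be right-continuous; `ν` is built from its right-continuous regularization
  have hbotF : Tendsto F atBot (𝓝 0) :=
    (ENNReal.tendsto_toReal ENNReal.zero_ne_top).comp hbot
  have htopF : Tendsto F atTop (𝓝 1) :=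
    (ENNReal.tendsto_toReal ENNReal.one_ne_top).comp (tendsto_supCdf_atTop hM hne)
  have hνIic :
      ∀ x, hF.stieltjesFunction.measure (Iic x) = ENNReal.ofReal (Function.rightLim F x) := by
    simp [StieltjesFunction.measure_Iic _ (hF.tendsto_stieltjesFunction_atBot hbotF),
      hF.stieltjesFunction_eq]
  refine ⟨hF.stieltjesFunction.measure, ⟨?_⟩, fun x ↦ ?_, ?_⟩
  · simpa using StieltjesFunction.measure_univ _ (hF.tendsto_stieltjesFunction_atBot hbotF)
      (hF.tendsto_stieltjesFunction_atTop htopF)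
  · rw [hνIic, ← ENNReal.ofReal_toReal (hfin x)]
    exact ENNReal.ofReal_le_ofReal (hF.le_rightLim le_rfl)
  · refine hF.countable_stieltjesFunction_ne.mono fun x ↦ mt fun hx ↦ ?_
    rw [hνIic, ← hF.stieltjesFunction_eq, hx, ENNReal.ofReal_toReal (hfin x)]

theorem exists_mem_P2_measure_Iic_le {M : Set (Measure ℝ)} (hM : M ⊆ P2)
    (h : ∫⁻ u in Ioi 0, supCdf M (-u) * ENNReal.ofReal u < ⊤) :
    ∃ ν ∈ P2, ∀ μ ∈ M, ∀ x, μ (Iic x) ≤ ν (Iic x) := by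
  -- adding `δ₀` to the family forces the lower bound to live on `(-∞, 0]`
  set M₀ := insert (Measure.dirac (0 : ℝ)) M
  have hM₀ : ∀ μ ∈ M₀, IsProbabilityMeasure μ := by
    rintro μ (rfl | hμ)
    exacts [inferInstance, (hM hμ).1]
  have hneg : ∀ x < 0, supCdf M₀ x = supCdf M x := fun x hx ↦ by
    simp [M₀, supCdf_insert, hx.not_ge]
  have hbot : Tendsto (supCdf M₀) atBot (𝓝 0) :=
    (tendsto_supCdf_atBot h).congr' <|
      (eventually_lt_atBot 0).mono fun x hx ↦ (hneg x hx).symm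
  obtain ⟨ν, hν, hle, hcount⟩ :=
    exists_isProbabilityMeasure_measure_Iic_eq_supCdf hM₀ (insert_nonempty _ _) hbot
  have hνIic : ∀ μ ∈ M₀, ∀ x, μ (Iic x) ≤ ν (Iic x) := fun μ hμ x ↦
    (measure_Iic_le_supCdf hμ x).trans (hle x)
  have hν0 : ∀ᵐ x ∂ν, x ≤ 0 := by
    have : ν (Iic 0) = 1 := le_antisymm prob_le_one (by simpa using hνIic _ (mem_insert _ M) 0)
    exact mem_ae_iff.2 ((prob_compl_eq_zero_iff measurableSet_Iic).2 this)
  have htail : ∫⁻ u in Ioi 0, ν (Iic (-u)) * ENNReal.ofReal u =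
      ∫⁻ u in Ioi 0, supCdf M (-u) * ENNReal.ofReal u := by
    refine setLIntegral_congr_fun_ae measurableSet_Ioi ?_
    filter_upwards [(hcount.preimage neg_injective).ae_notMem volume] with u hu hu0
    rw [Classical.not_not.1 hu, hneg _ (neg_lt_zero.2 hu0)]
  exact ⟨ν, ⟨hν, integrable_sq_of_lintegral_measure_Iic_neg_mul_lt_top hν0 (htail ▸ h)⟩,
    fun μ hμ ↦ hνIic μ (mem_insert_of_mem _ hμ)⟩

/-- A family `M ⊆ 𝒫₂(ℝ)` is bounded from below for the stochastic order
iff `∫₀^∞ (sup_{μ∈M} μ((-∞,-u])) · u du < ∞`. -/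
theorem bounded_below_iff_tail_integral (M : Set (Measure ℝ)) (hM : M ⊆ P2) :
    (∃ ν ∈ P2, ∀ μ ∈ M, StOrder ν μ) ↔
      (∫⁻ u in Set.Ioi (0:ℝ), (⨆ μ ∈ M, μ (Set.Iic (-u))) * ENNReal.ofReal u) < ⊤ := by
  constructor
  · rintro ⟨ν, ⟨hν, hν2⟩, hst⟩
    calc ∫⁻ u in Ioi 0, supCdf M (-u) * ENNReal.ofReal u
        ≤ ∫⁻ u in Ioi 0, ν (Iic (-u)) * ENNReal.ofReal u :=
          lintegral_mono fun u ↦ mul_le_mul_left (iSup₂_le fun μ hμ ↦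
            have := (hM hμ).1; (hst μ hμ).measure_Iic_le (-u)) _
      _ < ⊤ := lintegral_measure_Iic_neg_mul_lt_top hν2
  · intro h
    obtain ⟨ν, hν, hle⟩ := exists_mem_P2_measure_Iic_le hM h
    have := hν.1
    exact ⟨ν, hν, fun μ hμ ↦ have := (hM hμ).1; stOrder_of_measure_Iic_le (hle μ hμ)⟩
end
end

section
/- If a family M of probability measures in 𝒫₂(ℝ) is bounded from above with respect to the stochastic order, then M has a supremum: there exists ν = sup_{≤_st} M ∈ 𝒫₂(ℝ), namely the measure whose cumulative distribution function is F(x) = inf_{μ∈M} F_μ(x), and any other upper bound ν̃ of M satisfies ν ≤_st ν̃. -/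
/-!
For probability measures on ℝ, `StOrder μ ν` is the reverse pointwise order `cdf ν ≤ cdf μ`:
one direction tests against indicators of half-lines, the other is the layer-cake formula, since
the superlevel sets of a monotone function are upper sets, i.e. half-lines. The pointwise infimum
of the distribution functions of `M` is again right-continuous (an infimum of upper
semicontinuous functions is upper semicontinuous), tends to `0` at `-∞`, and tends to `1` at `+∞`
because it lies above the distribution function of an upper bound; so it is the distribution
function of a probability measure, which is then the least upper bound of `M`. Its second moment
is finite: its positive part is dominated by that of the upper bound, its negative part by that of
any member of `M`.
-/

open MeasureTheory Filter Set

noncomputable section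

open ProbabilityTheory Topology

theorem IsUpperSet.eq_empty_or_univ_or_Ici_or_Ioi {α : Type*} [ConditionallyCompleteLinearOrder α]
    {s : Set α} (hs : IsUpperSet s) : s = ∅ ∨ s = univ ∨ ∃ a, s = Ici a ∨ s = Ioi a := by
  rcases s.eq_empty_or_nonempty with rfl | hne
  · exact Or.inl rfl
  by_cases hbdd : BddBelow s
  · refine Or.inr <| Or.inr ⟨sInf s, mem_Ici_Ioi_of_subset_of_subset (fun x hx => ?_)
      fun x hx => csInf_le hbdd hx⟩
    obtain ⟨y, hy, hyx⟩ := exists_lt_of_csInf_lt hne hx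
    exact hs hyx.le hy
  · refine Or.inr <| Or.inl <| eq_univ_of_forall fun x => ?_
    obtain ⟨y, hy, hyx⟩ := not_bddBelow_iff.mp hbdd x
    exact hs hyx.le hy

section CdfComparison

variable {μ ν : Measure ℝ} [IsProbabilityMeasure μ] [IsProbabilityMeasure ν]

lemma measure_Iio_le_of_cdf_le (h : ∀ x, cdf ν x ≤ cdf μ x) (x : ℝ) : ν (Iio x) ≤ μ (Iio x) := by
  rw [← measure_cdf μ, ← measure_cdf ν, StieltjesFunction.measure_Iio _ (tendsto_cdf_atBot μ),
    StieltjesFunction.measure_Iio _ (tendsto_cdf_atBot ν)]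
  refine ENNReal.ofReal_le_ofReal (sub_le_sub_right ?_ 0)
  exact le_of_tendsto_of_tendsto' ((monotone_cdf ν).tendsto_leftLim x)
    ((monotone_cdf μ).tendsto_leftLim x) fun y => h y

lemma measure_Ioi_le_of_cdf_le (h : ∀ x, cdf ν x ≤ cdf μ x) (x : ℝ) : μ (Ioi x) ≤ ν (Ioi x) := by
  rw [← compl_Iic, prob_compl_eq_one_sub measurableSet_Iic, prob_compl_eq_one_sub measurableSet_Iic,
    ← ofReal_cdf, ← ofReal_cdf]
  exact tsub_le_tsub_left (ENNReal.ofReal_le_ofReal (h x)) 1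

lemma measure_Ici_le_of_cdf_le (h : ∀ x, cdf ν x ≤ cdf μ x) (x : ℝ) : μ (Ici x) ≤ ν (Ici x) := by
  rw [← compl_Iio, prob_compl_eq_one_sub measurableSet_Iio, prob_compl_eq_one_sub measurableSet_Iio]
  exact tsub_le_tsub_left (measure_Iio_le_of_cdf_le h x) 1

lemma measure_le_of_isUpperSet_of_cdf_le (h : ∀ x, cdf ν x ≤ cdf μ x) {s : Set ℝ}
    (hs : IsUpperSet s) : μ s ≤ ν s := by
  rcases hs.eq_empty_or_univ_or_Ici_or_Ioi with rfl | rfl | ⟨a, rfl | rfl⟩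
  · simp
  · simp
  · exact measure_Ici_le_of_cdf_le h a
  · exact measure_Ioi_le_of_cdf_le h a

lemma measure_le_of_isLowerSet_of_cdf_le (h : ∀ x, cdf ν x ≤ cdf μ x) {s : Set ℝ}
    (hs : IsLowerSet s) : ν s ≤ μ s := by
  have hsc : MeasurableSet sᶜ := hs.compl.ordConnected.measurableSet
  rw [← compl_compl s, prob_compl_eq_one_sub hsc, prob_compl_eq_one_sub hsc]
  exact tsub_le_tsub_left (measure_le_of_isUpperSet_of_cdf_le h hs.compl) 1

lemma lintegral_le_of_monotone_of_cdf_le (h : ∀ x, cdf ν x ≤ cdf μ x) {g : ℝ → ℝ} (hg : Monotone g)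
    (hg0 : ∀ x, 0 ≤ g x) : ∫⁻ x, ENNReal.ofReal (g x) ∂μ ≤ ∫⁻ x, ENNReal.ofReal (g x) ∂ν := by
  rw [lintegral_eq_lintegral_meas_lt μ (ae_of_all _ hg0) hg.measurable.aemeasurable,
    lintegral_eq_lintegral_meas_lt ν (ae_of_all _ hg0) hg.measurable.aemeasurable]
  exact lintegral_mono fun t => measure_le_of_isUpperSet_of_cdf_le h
    fun _ _ hab hta => hta.trans_le (hg hab)

lemma lintegral_le_of_antitone_of_cdf_le (h : ∀ x, cdf ν x ≤ cdf μ x) {g : ℝ → ℝ} (hg : Antitone g)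
    (hg0 : ∀ x, 0 ≤ g x) : ∫⁻ x, ENNReal.ofReal (g x) ∂ν ≤ ∫⁻ x, ENNReal.ofReal (g x) ∂μ := by
  rw [lintegral_eq_lintegral_meas_lt μ (ae_of_all _ hg0) hg.measurable.aemeasurable,
    lintegral_eq_lintegral_meas_lt ν (ae_of_all _ hg0) hg.measurable.aemeasurable]
  exact lintegral_mono fun t => measure_le_of_isLowerSet_of_cdf_le h
    fun _ _ hab hta => hta.trans_le (hg hab)

lemma MeasureTheory.Integrable.of_monotone_of_cdf_le (h : ∀ x, cdf ν x ≤ cdf μ x) {g : ℝ → ℝ}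
    (hg : Monotone g) (hg0 : ∀ x, 0 ≤ g x) (hgν : Integrable g ν) : Integrable g μ := by
  rw [← lintegral_ofReal_ne_top_iff_integrable hg.measurable.aestronglyMeasurable
    (ae_of_all _ hg0)] at hgν ⊢
  exact ne_top_of_le_ne_top hgν (lintegral_le_of_monotone_of_cdf_le h hg hg0)

lemma MeasureTheory.Integrable.of_antitone_of_cdf_le (h : ∀ x, cdf ν x ≤ cdf μ x) {g : ℝ → ℝ}
    (hg : Antitone g) (hg0 : ∀ x, 0 ≤ g x) (hgμ : Integrable g μ) : Integrable g ν := by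
  rw [← lintegral_ofReal_ne_top_iff_integrable hg.measurable.aestronglyMeasurable
    (ae_of_all _ hg0)] at hgμ ⊢
  exact ne_top_of_le_ne_top hgμ (lintegral_le_of_antitone_of_cdf_le h hg hg0)

lemma integral_le_of_monotone_of_cdf_le (h : ∀ x, cdf ν x ≤ cdf μ x) {g : ℝ → ℝ} (hg : Monotone g)
    (hg0 : ∀ x, 0 ≤ g x) (hgν : Integrable g ν) : ∫ x, g x ∂μ ≤ ∫ x, g x ∂ν := by
  rw [integral_eq_lintegral_of_nonneg_ae (ae_of_all _ hg0) hg.measurable.aestronglyMeasurable,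
    integral_eq_lintegral_of_nonneg_ae (ae_of_all _ hg0) hg.measurable.aestronglyMeasurable]
  exact ENNReal.toReal_mono hgν.lintegral_lt_top.ne (lintegral_le_of_monotone_of_cdf_le h hg hg0)

lemma stOrder_of_cdf_le (h : ∀ x, cdf ν x ≤ cdf μ x) : StOrder μ ν := by
  rintro f hf ⟨C, hC⟩
  have hf_int : ∀ ρ : Measure ℝ, [IsProbabilityMeasure ρ] → Integrable f ρ := fun ρ _ =>
    .of_bound hf.measurable.aestronglyMeasurable C (ae_of_all _ hC)
  have hshift := integral_le_of_monotone_of_cdf_le h (hf.add_const C)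
    (fun x => by linarith [neg_abs_le (f x), hC x]) ((hf_int ν).add (integrable_const C))
  rw [integral_add (hf_int μ) (integrable_const C), integral_add (hf_int ν) (integrable_const C),
    integral_const, integral_const] at hshift
  simpa using hshift

lemma cdf_le_of_stOrder (h : StOrder μ ν) (x : ℝ) : cdf ν x ≤ cdf μ x := by
  have h_mono : Monotone ((Ioi x).indicator (1 : ℝ → ℝ)) := fun a b hab => by
    by_cases ha : a ∈ Ioi x
    · simp [ha, mem_Ioi.2 (lt_of_lt_of_le ha hab)]
    · simp only [indicator_of_notMem ha]
      exact indicator_nonneg (fun _ _ => zero_le_one) b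
  have h_Ioi := h _ h_mono ⟨1, fun y => by by_cases hy : y ∈ Ioi x <;> simp [hy]⟩
  rw [integral_indicator_one measurableSet_Ioi, integral_indicator_one measurableSet_Ioi] at h_Ioi
  rw [cdf_eq_real, cdf_eq_real, ← compl_Ioi, probReal_compl_eq_one_sub measurableSet_Ioi,
    probReal_compl_eq_one_sub measurableSet_Ioi]
  linarith

end CdfComparison

lemma integrable_sq_of_cdf_le_of_le {ρ₁ ν ρ₂ : Measure ℝ} [IsProbabilityMeasure ρ₁]
    [IsProbabilityMeasure ν] [IsProbabilityMeasure ρ₂]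
    (h₁ : ∀ x, cdf ν x ≤ cdf ρ₁ x) (h₂ : ∀ x, cdf ρ₂ x ≤ cdf ν x)
    (hρ₁ : Integrable (fun x : ℝ => x ^ 2) ρ₁) (hρ₂ : Integrable (fun x : ℝ => x ^ 2) ρ₂) :
    Integrable (fun x : ℝ => x ^ 2) ν := by
  have h_split : (fun x : ℝ => x ^ 2) = fun x => max x 0 ^ 2 + min x 0 ^ 2 := by
    ext x
    rcases le_total x 0 with hx | hx <;> simp [hx]
  have h_pos : Monotone fun x : ℝ => max x 0 ^ 2 := fun a b hab =>
    pow_le_pow_left₀ (le_max_right a 0) (max_le_max_right 0 hab) 2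
  have h_neg : Antitone fun x : ℝ => min x 0 ^ 2 := fun a b hab => by
    simpa using pow_le_pow_left₀ (neg_nonneg.2 (min_le_right b 0))
      (neg_le_neg (min_le_min_right 0 hab)) 2
  have h_pos_le : ∀ x : ℝ, ‖max x 0 ^ 2‖ ≤ x ^ 2 := fun x => by
    rcases le_total x 0 with hx | hx <;> simp [hx, sq_nonneg]
  have h_neg_le : ∀ x : ℝ, ‖min x 0 ^ 2‖ ≤ x ^ 2 := fun x => by
    rcases le_total x 0 with hx | hx <;> simp [hx]
  rw [h_split]
  exact (Integrable.of_monotone_of_cdf_le h₂ h_pos (fun _ => sq_nonneg _)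
      (hρ₂.mono' h_pos.measurable.aestronglyMeasurable (ae_of_all _ h_pos_le))).add
    (Integrable.of_antitone_of_cdf_le h₁ h_neg (fun _ => sq_nonneg _)
      (hρ₁.mono' h_neg.measurable.aestronglyMeasurable (ae_of_all _ h_neg_le)))

protected def StieltjesFunction.iInf {ι : Type*} (F : ι → StieltjesFunction ℝ)
    (hF : ∀ x, BddBelow (range fun i => F i x)) : StieltjesFunction ℝ where
  toFun x := ⨅ i, F i x
  mono' _ _ hxy := ciInf_mono (hF _) fun i => (F i).mono hxy
  right_continuous' x := continuousWithinAt_iff_lower_upperSemicontinuousWithinAt.2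
    ⟨fun _ hy => eventually_nhdsWithin_of_forall fun _ hz =>
      hy.trans_le (ciInf_mono (hF x) fun i => (F i).mono hz),
    upperSemicontinuousWithinAt_ciInf (Eventually.of_forall hF)
      fun i => ((F i).right_continuous x).upperSemicontinuousWithinAt⟩

lemma exists_cdf_eq_iInf {ι : Type*} [Nonempty ι] (μ : ι → Measure ℝ) {ρ : Measure ℝ}
    (hρ : ∀ i x, cdf ρ x ≤ cdf (μ i) x) :
    ∃ ν : Measure ℝ, IsProbabilityMeasure ν ∧ ∀ x, cdf ν x = ⨅ i, cdf (μ i) x := by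
  have h_bdd : ∀ x, BddBelow (range fun i => cdf (μ i) x) :=
    fun x => ⟨0, by rintro _ ⟨i, rfl⟩; exact cdf_nonneg _ _⟩
  set F := StieltjesFunction.iInf (fun i => cdf (μ i)) h_bdd
  obtain ⟨i₀⟩ := ‹Nonempty ι›
  have h_bot : Tendsto F atBot (𝓝 0) :=
    tendsto_of_tendsto_of_tendsto_of_le_of_le tendsto_const_nhds (tendsto_cdf_atBot (μ i₀))
      (fun x => le_ciInf fun i => cdf_nonneg _ _) fun x => ciInf_le (h_bdd x) i₀
  have h_top : Tendsto F atTop (𝓝 1) :=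
    tendsto_of_tendsto_of_tendsto_of_le_of_le (tendsto_cdf_atTop ρ) tendsto_const_nhds
      (fun x => le_ciInf fun i => hρ i x) fun x => (ciInf_le (h_bdd x) i₀).trans (cdf_le_one _ _)
  exact ⟨F.measure, F.isProbabilityMeasure h_bot h_top,
    fun x => by rw [cdf_measure_stieltjesFunction F h_bot h_top]; rfl⟩

/-- If a nonempty family `M ⊆ 𝒫₂(ℝ)` is bounded above for the stochastic
order, it has a supremum in `𝒫₂(ℝ)`, namely the measure whose CDF is
`F(x) = inf_{μ∈M} F_μ(x)`; every other upper bound dominates it. -/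
theorem stochastic_order_sup_exists (M : Set (Measure ℝ)) (hM : M ⊆ P2)
    (hne : M.Nonempty) (hub : ∃ ν ∈ P2, ∀ μ ∈ M, StOrder μ ν) :
    ∃ ν ∈ P2, (∀ x : ℝ, ν (Set.Iic x) = ⨅ μ ∈ M, μ (Set.Iic x)) ∧
      (∀ μ ∈ M, StOrder μ ν) ∧
      ∀ ν' ∈ P2, (∀ μ ∈ M, StOrder μ ν') → StOrder ν ν' := by
  obtain ⟨ρ, ⟨hρ, hρ_sq⟩, hρ_ub⟩ := hub
  obtain ⟨μ₀, hμ₀⟩ := hne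
  have := (hM hμ₀).1
  have : Nonempty M := ⟨⟨μ₀, hμ₀⟩⟩
  have : ∀ μ : M, IsProbabilityMeasure (μ : Measure ℝ) := fun μ => (hM μ.2).1
  have h_bdd : ∀ x, BddBelow (range fun μ : M => cdf (μ : Measure ℝ) x) :=
    fun x => ⟨0, by rintro _ ⟨μ, rfl⟩; exact cdf_nonneg _ _⟩
  obtain ⟨ν, hν, hν_cdf⟩ := exists_cdf_eq_iInf (fun μ : M => (μ : Measure ℝ)) (ρ := ρ)
    fun μ => cdf_le_of_stOrder (hρ_ub μ μ.2)
  have hν_le : ∀ μ ∈ M, ∀ x, cdf ν x ≤ cdf μ x := fun μ hμ x =>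
    hν_cdf x ▸ ciInf_le (h_bdd x) ⟨μ, hμ⟩
  have h_le_ν : ∀ ν' [IsProbabilityMeasure ν'], (∀ μ ∈ M, StOrder μ ν') →
      ∀ x, cdf ν' x ≤ cdf ν x := fun ν' _ h x =>
    hν_cdf x ▸ le_ciInf fun μ => cdf_le_of_stOrder (h μ μ.2) x
  refine ⟨ν, ⟨hν, integrable_sq_of_cdf_le_of_le (hν_le μ₀ hμ₀) (h_le_ν ρ hρ_ub) (hM hμ₀).2 hρ_sq⟩,
    fun x => ?_, fun μ hμ => have := (hM hμ).1; stOrder_of_cdf_le (hν_le μ hμ),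
    fun ν' ⟨hν', _⟩ h => stOrder_of_cdf_le (h_le_ν ν' h)⟩
  rw [← ofReal_cdf, hν_cdf, ENNReal.ofReal_iInf, iInf_subtype']
  exact iInf_congr fun μ => ofReal_cdf _ x
end
end

section
/- If M is a bounded subset of 𝒫_p(ℝ) for some p > 2 (i.e., sup_{μ∈M} ∫ |x|^p dμ(x) < ∞), then M is order bounded in 𝒫₂(ℝ) with respect to the stochastic order: there exist measures μ̲, μ̄ ∈ 𝒫₂(ℝ) with μ̲ ≤_st μ ≤_st μ̄ for all μ ∈ M. -/
open MeasureTheory Filter Set ENNReal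

noncomputable section

/-!
By Chebyshev's inequality, moments `∫ |x| ^ p dμ ≤ t ^ p` give the tail bound
`μ {x | a ≤ |x|} ≤ (t / a) ^ p`, which is the tail of the Pareto law of scale `t` and shape `p`;
that law has a finite second moment because `p > 2`. Tails `ν [a, ∞) ≤ u (a, ∞)` dominate `ν` by
`u` on every upper set of ℝ, hence, by the layer-cake formula, on integrals of bounded increasing
functions. So the Pareto law bounds `M` from above, and its reflection bounds `M` from below.
-/

open ProbabilityTheory

lemma measure_le_of_measure_Ici_le_measure_Ioi {α : Type*} [ConditionallyCompleteLinearOrder α]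
    [MeasurableSpace α] {ν u : Measure α} [IsProbabilityMeasure ν] [IsProbabilityMeasure u]
    (h : ∀ a, ν (Ici a) ≤ u (Ioi a)) {S : Set α} (hS : IsUpperSet S) : ν S ≤ u S := by
  rcases S.eq_empty_or_nonempty with rfl | hne
  · simp
  by_cases hbdd : BddBelow S
  · calc ν S ≤ ν (Ici (sInf S)) := measure_mono fun x hx => csInf_le hbdd hx
      _ ≤ u (Ioi (sInf S)) := h _
      _ ≤ u S := measure_mono fun x hx => by
        obtain ⟨y, hyS, hyx⟩ := exists_lt_of_csInf_lt hne hx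
        exact hS hyx.le hyS
  · have hSuniv : S = univ := eq_univ_of_forall fun x => by
      obtain ⟨y, hyS, hyx⟩ := not_bddBelow_iff.mp hbdd x
      exact hS hyx.le hyS
    rw [hSuniv, measure_univ, measure_univ]

section StochasticOrder

variable {ν u : Measure ℝ}

lemma lintegral_ofReal_le_of_isUpperSet (h : ∀ S : Set ℝ, IsUpperSet S → ν S ≤ u S)
    {g : ℝ → ℝ} (hg : Monotone g) (hg0 : 0 ≤ g) :
    ∫⁻ x, ENNReal.ofReal (g x) ∂ν ≤ ∫⁻ x, ENNReal.ofReal (g x) ∂u := by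
  rw [lintegral_eq_lintegral_meas_lt ν (ae_of_all _ hg0) hg.measurable.aemeasurable,
    lintegral_eq_lintegral_meas_lt u (ae_of_all _ hg0) hg.measurable.aemeasurable]
  exact lintegral_mono fun t => h _ fun x y hxy hx => hx.trans_le (hg hxy)

lemma stOrder_of_isUpperSet [IsProbabilityMeasure ν] [IsProbabilityMeasure u]
    (h : ∀ S : Set ℝ, IsUpperSet S → ν S ≤ u S) : StOrder ν u := by
  rintro f hf ⟨C, hC⟩
  have hfint : ∀ (m : Measure ℝ) [IsFiniteMeasure m], Integrable f m := fun m _ =>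
    (integrable_const C).mono' hf.measurable.aestronglyMeasurable (ae_of_all _ hC)
  have hg0 : 0 ≤ fun x => f x + C := fun x => by
    show 0 ≤ f x + C
    linarith [neg_abs_le (f x), hC x]
  have hgint : ∀ (m : Measure ℝ) [IsFiniteMeasure m], Integrable (fun x => f x + C) m :=
    fun m _ => (hfint m).add (integrable_const C)
  have key := lintegral_ofReal_le_of_isUpperSet h (hf.add_const C) hg0
  rw [← ofReal_integral_eq_lintegral_ofReal (hgint ν) (ae_of_all _ hg0),
    ← ofReal_integral_eq_lintegral_ofReal (hgint u) (ae_of_all _ hg0),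
    ENNReal.ofReal_le_ofReal_iff (integral_nonneg hg0),
    integral_add (hfint ν) (integrable_const C), integral_add (hfint u) (integrable_const C)] at key
  simpa using key

end StochasticOrder

instance Measure.neg.instIsProbabilityMeasure {G : Type*} [MeasurableSpace G] [Neg G]
    [MeasurableNeg G] (μ : Measure G) [IsProbabilityMeasure μ] : IsProbabilityMeasure μ.neg :=
  Measure.isProbabilityMeasure_map measurable_neg.aemeasurable

lemma integral_measure_neg {G E : Type*} [MeasurableSpace G] [Neg G] [MeasurableNeg G]
    [NormedAddCommGroup E] [NormedSpace ℝ E] (μ : Measure G) {f : G → E}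
    (hf : AEStronglyMeasurable f μ.neg) : ∫ x, f x ∂μ.neg = ∫ x, f (-x) ∂μ :=
  integral_map measurable_neg.aemeasurable hf

lemma StOrder.neg {μ ν : Measure ℝ} (h : StOrder μ ν) : StOrder ν.neg μ.neg := by
  rintro f hf ⟨C, hC⟩
  have hreflect := h (fun x => -f (-x)) (fun x y hxy => neg_le_neg (hf (neg_le_neg hxy)))
    ⟨C, fun x => (abs_neg _).trans_le (hC _)⟩
  rw [integral_neg, integral_neg] at hreflect
  rw [integral_measure_neg _ hf.measurable.aestronglyMeasurable,
    integral_measure_neg _ hf.measurable.aestronglyMeasurable]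
  exact neg_le_neg_iff.mp hreflect

lemma neg_mem_P2 {μ : Measure ℝ} (hμ : μ ∈ P2) : μ.neg ∈ P2 := by
  obtain ⟨hprob, hsq⟩ := hμ
  refine ⟨inferInstance, ?_⟩
  rw [Measure.neg_def, integrable_map_measure (by fun_prop) measurable_neg.aemeasurable]
  simpa [Function.comp_def] using hsq

namespace ProbabilityTheory

variable {t r b : ℝ}

lemma paretoMeasure_Ioi_of_lt (ht : 0 < t) (hr : 0 < r) (hb : b < t) :
    paretoMeasure t r (Ioi b) = 1 := by
  have := isProbabilityMeasure_paretoMeasure ht hr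
  rw [← prob_compl_eq_zero_iff measurableSet_Ioi, compl_Ioi]
  refine measure_mono_null (Iic_subset_Iio.mpr hb) ?_
  rw [paretoMeasure, withDensity_apply _ measurableSet_Iio, lintegral_paretoPDF_of_le le_rfl]

lemma paretoMeasure_Ioi_of_le (ht : 0 < t) (hr : 0 < r) (hb : t ≤ b) :
    paretoMeasure t r (Ioi b) = ENNReal.ofReal ((t / b) ^ r) := by
  have hb0 : 0 < b := ht.trans_le hb
  have hexp : -(r + 1) < -1 := by linarith
  have hint : IntegrableOn (fun x : ℝ => r * t ^ r * x ^ (-(r + 1))) (Ioi b) :=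
    (integrableOn_Ioi_rpow_of_lt hexp hb0).const_mul _
  rw [paretoMeasure, withDensity_apply _ measurableSet_Ioi,
    setLIntegral_congr_fun measurableSet_Ioi fun x hx => paretoPDF_of_le (hb.trans (le_of_lt hx)),
    ← ofReal_integral_eq_lintegral_ofReal hint, integral_const_mul,
    integral_Ioi_rpow_of_lt hexp hb0, Real.div_rpow ht.le hb0.le]
  · congr 1
    rw [show -(r + 1) + 1 = -r by ring, Real.rpow_neg hb0.le]
    field_simp
  · filter_upwards [ae_restrict_mem measurableSet_Ioi] with x hx
    have : 0 < x := hb0.trans hx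
    positivity

lemma integrable_sq_paretoMeasure (ht : 0 < t) (hr : 2 < r) :
    Integrable (fun x : ℝ => x ^ 2) (paretoMeasure t r) := by
  have hmoment : IntegrableOn (fun x : ℝ => r * t ^ r * x ^ (1 - r)) (Ici t) :=
    (integrableOn_Ici_iff_integrableOn_Ioi).mpr
      ((integrableOn_Ioi_rpow_of_lt (by linarith) ht).const_mul _)
  rw [paretoMeasure, integrable_withDensity_iff
    (show Measurable (paretoPDF t r) from (measurable_paretoPDFReal t r).ennreal_ofReal)
    (ae_of_all _ fun _ => ENNReal.ofReal_lt_top)]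
  refine (hmoment.integrable_indicator measurableSet_Ici).congr (ae_of_all _ fun x => ?_)
  simp only [paretoPDF]
  rw [ENNReal.toReal_ofReal (paretoPDFReal_nonneg ht.le (by linarith) x), paretoPDFReal]
  by_cases hx : t ≤ x
  · have hx0 : 0 < x := ht.trans_le hx
    rw [indicator_of_mem (mem_Ici.mpr hx), if_pos hx, show 1 - r = 2 + -(r + 1) by ring,
      Real.rpow_add hx0, Real.rpow_two]
    ring
  · rw [indicator_of_notMem (notMem_Ici.mpr (not_le.mp hx)), if_neg hx, mul_zero]

end ProbabilityTheory

lemma stOrder_paretoMeasure {ν : Measure ℝ} [IsProbabilityMeasure ν] {t r : ℝ} (ht : 0 < t)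
    (hr : 0 < r) (h : ∀ a, t ≤ a → ν (Ici a) ≤ ENNReal.ofReal ((t / a) ^ r)) :
    StOrder ν (paretoMeasure t r) := by
  have := isProbabilityMeasure_paretoMeasure ht hr
  refine stOrder_of_isUpperSet fun S hS => measure_le_of_measure_Ici_le_measure_Ioi (fun a => ?_) hS
  rcases lt_or_ge a t with hat | hta
  · rw [paretoMeasure_Ioi_of_lt ht hr hat]
    exact prob_le_one
  · rw [paretoMeasure_Ioi_of_le ht hr hta]
    exact h a hta

lemma measure_le_abs_le_of_lintegral_rpow_le {μ : Measure ℝ} {p t a : ℝ} (hp : 0 < p) (ht : 0 ≤ t)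
    (ha : 0 < a) (hμ : ∫⁻ x, ENNReal.ofReal (|x| ^ p) ∂μ ≤ ENNReal.ofReal (t ^ p)) :
    μ {x | a ≤ |x|} ≤ ENNReal.ofReal ((t / a) ^ p) := by
  have hap : 0 < a ^ p := Real.rpow_pos_of_pos ha p
  calc μ {x | a ≤ |x|}
      ≤ μ {x | ENNReal.ofReal (a ^ p) ≤ ENNReal.ofReal (|x| ^ p)} := measure_mono fun x hx =>
        ENNReal.ofReal_le_ofReal (Real.rpow_le_rpow ha.le hx hp.le)
    _ ≤ (∫⁻ x, ENNReal.ofReal (|x| ^ p) ∂μ) / ENNReal.ofReal (a ^ p) :=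
        meas_ge_le_lintegral_div (by fun_prop) (ENNReal.ofReal_pos.mpr hap).ne'
          ENNReal.ofReal_ne_top
    _ ≤ ENNReal.ofReal (t ^ p) / ENNReal.ofReal (a ^ p) := by gcongr
    _ = ENNReal.ofReal ((t / a) ^ p) := by
        rw [← ENNReal.ofReal_div_of_pos hap, Real.div_rpow ht ha.le]

/-- If `M` is a bounded subset of `𝒫_p(ℝ)` for some `p > 2`
(uniformly bounded `p`-th moments), then `M` is order bounded in `𝒫₂(ℝ)`
with respect to the stochastic order. -/
theorem pth_moment_bounded_implies_order_bounded (p : ℝ) (hp : 2 < p)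
    (M : Set (Measure ℝ)) (hprob : ∀ μ ∈ M, IsProbabilityMeasure μ)
    (hbd : ∃ C : ℝ≥0∞, C < ⊤ ∧ ∀ μ ∈ M, (∫⁻ x, ENNReal.ofReal (|x| ^ p) ∂μ) ≤ C) :
    (∃ l ∈ P2, ∀ μ ∈ M, StOrder l μ) ∧ (∃ u ∈ P2, ∀ μ ∈ M, StOrder μ u) := by
  obtain ⟨C, hC, hCμ⟩ := hbd
  have hp0 : 0 < p := by linarith
  set t := (C.toReal + 1) ^ p⁻¹
  have ht : 0 < t := by positivity
  have htail : ∀ μ ∈ M, ∀ a, t ≤ a → μ {x | a ≤ |x|} ≤ ENNReal.ofReal ((t / a) ^ p) := by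
    refine fun μ hμ a ha => measure_le_abs_le_of_lintegral_rpow_le hp0 ht.le (ht.trans_le ha) ?_
    rw [Real.rpow_inv_rpow (by positivity) hp0.ne']
    exact (hCμ μ hμ).trans
      ((ENNReal.le_ofReal_iff_toReal_le hC.ne (by positivity)).mpr (by linarith))
  have hu : paretoMeasure t p ∈ P2 :=
    ⟨isProbabilityMeasure_paretoMeasure ht hp0, integrable_sq_paretoMeasure ht hp⟩
  refine ⟨⟨(paretoMeasure t p).neg, neg_mem_P2 hu, fun μ hμ => ?_⟩, ⟨_, hu, fun μ hμ => ?_⟩⟩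
  all_goals have := hprob μ hμ
  · rw [← μ.neg_neg]
    refine (stOrder_paretoMeasure ht hp0 fun a ha => ?_).neg
    rw [Measure.neg_apply, neg_Ici]
    exact (measure_mono fun x (hx : x ≤ -a) => (le_neg_of_le_neg hx).trans (neg_le_abs x)).trans
      (htail μ hμ a ha)
  · exact stOrder_paretoMeasure ht hp0 fun a ha =>
      (measure_mono fun x (hx : a ≤ x) => hx.trans (le_abs_self x)).trans (htail μ hμ a ha)
end
end

section
/- If M ⊂ 𝒫₂(ℝ) is order bounded with respect to the stochastic order (there exist μ̲, μ̄ ∈ 𝒫₂(ℝ) with μ̲ ≤_st μ ≤_st μ̄ for all μ ∈ M), then M is tight and 2-uniformly integrable, i.e., lim_{N→∞} sup_{μ∈M} ∫_{|x|≥N} |x|² dμ(x) = 0; consequently M is relatively compact in the 2-Wasserstein space (𝒫₂(ℝ), 𝒲₂). -/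
/-!
Stochastic order is pointwise order of quantile functions, and every `μ ∈ 𝒫₂(ℝ)` is the law of
its quantile function `q_μ` under Lebesgue measure on `(0, 1)`. So the quantile functions of an
order bounded family are squeezed between `q_l` and `q_u`, hence all dominated by the square
integrable `max |q_l| |q_u|`, which gives uniform integrability and tightness. Given a sequence,
Helly's selection theorem extracts a subsequence of the monotone `q_{ρ n}` converging a.e.;
dominated convergence makes it converge in `L²(0, 1)`, and the quantile coupling bounds `W₂` by
that `L²` distance.
-/

open MeasureTheory Filter Set ENNReal
open ProbabilityTheory Topology

noncomputable section

/-- The `p`-Wasserstein distance (ENNReal-valued), as an infimum over couplings. -/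
def Wp (p : ℝ) (μ ν : Measure ℝ) : ℝ≥0∞ :=
  ⨅ (π : Measure (ℝ × ℝ)) (_ : π.map Prod.fst = μ) (_ : π.map Prod.snd = ν),
    (∫⁻ q, ENNReal.ofReal (|q.1 - q.2| ^ p) ∂π) ^ (1 / p)

/-- The 2-Wasserstein distance. -/
def W2 (μ ν : Measure ℝ) : ℝ≥0∞ := Wp 2 μ ν

/-- Convergence of a sequence of measures in the 2-Wasserstein distance. -/
def W2Tendsto (μs : ℕ → Measure ℝ) (μ : Measure ℝ) : Prop :=
  Tendsto (fun n => W2 (μs n) μ) atTop (nhds 0)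

/-- The generalized inverse of the cdf, with junk value `0` outside `(0, 1)`. -/
def quantile (μ : Measure ℝ) (t : ℝ) : ℝ :=
  if t ∈ Ioo (0 : ℝ) 1 then sInf {x | t ≤ cdf μ x} else 0

local notation "Λ" => volume.restrict (Ioo (0 : ℝ) 1)

instance : IsProbabilityMeasure Λ := ⟨by simp [Real.volume_Ioo]⟩

section Quantile

variable {μ ν : Measure ℝ} {t : ℝ}

lemma nonempty_setOf_le_cdf (μ : Measure ℝ) (ht : t < 1) : {x | t ≤ cdf μ x}.Nonempty :=
  ((tendsto_cdf_atTop μ).eventually_const_le ht).exists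

lemma bddBelow_setOf_le_cdf (μ : Measure ℝ) (ht : 0 < t) : BddBelow {x | t ≤ cdf μ x} := by
  obtain ⟨y, hy⟩ := ((tendsto_cdf_atBot μ).eventually_lt_const ht).exists
  exact ⟨y, fun x hx => le_of_not_gt fun hxy => (hx.trans (monotone_cdf μ hxy.le)).not_gt hy⟩

lemma quantile_of_mem (ht : t ∈ Ioo (0 : ℝ) 1) : quantile μ t = sInf {x | t ≤ cdf μ x} :=
  if_pos ht

/-- Right continuity of the cdf puts the infimum in the set. -/
lemma le_cdf_quantile (ht : t ∈ Ioo (0 : ℝ) 1) : t ≤ cdf μ (quantile μ t) := by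
  rw [quantile_of_mem ht]
  set Q := sInf {x | t ≤ cdf μ x}
  have hright : ∀ᶠ x in 𝓝[>] Q, t ≤ cdf μ x := by
    filter_upwards [self_mem_nhdsWithin] with x hx
    obtain ⟨y, hy, hyx⟩ := exists_lt_of_csInf_lt (nonempty_setOf_le_cdf μ ht.2) hx
    exact hy.trans (monotone_cdf μ hyx.le)
  exact ge_of_tendsto (((cdf μ).right_continuous Q).mono Ioi_subset_Ici_self) hright

lemma quantile_le_iff (ht : t ∈ Ioo (0 : ℝ) 1) {x : ℝ} : quantile μ t ≤ x ↔ t ≤ cdf μ x :=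
  ⟨fun h => (le_cdf_quantile ht).trans (monotone_cdf μ h),
    fun h => (quantile_of_mem ht).symm ▸ csInf_le (bddBelow_setOf_le_cdf μ ht.1) h⟩

lemma monotoneOn_quantile : MonotoneOn (quantile μ) (Ioo (0 : ℝ) 1) := fun s hs t ht hst => by
  rw [quantile_of_mem hs, quantile_of_mem ht]
  exact csInf_le_csInf (bddBelow_setOf_le_cdf μ hs.1) (nonempty_setOf_le_cdf μ ht.2)
    fun x hx => hst.trans hx

lemma quantile_le_quantile_of_cdf_le (h : ∀ x, cdf ν x ≤ cdf μ x) (t : ℝ) :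
    quantile μ t ≤ quantile ν t := by
  by_cases ht : t ∈ Ioo (0 : ℝ) 1
  · exact (quantile_le_iff ht).2 ((le_cdf_quantile ht).trans (h _))
  · simp [quantile, ht]

@[fun_prop]
lemma measurable_quantile (μ : Measure ℝ) : Measurable (quantile μ) := by
  refine measurable_of_Iic fun x => ?_
  have : quantile μ ⁻¹' Iic x =
      Ioo 0 1 ∩ {t | t ≤ cdf μ x} ∪ (Ioo 0 1)ᶜ ∩ {_t | 0 ≤ x} := by
    ext t
    by_cases ht : t ∈ Ioo (0 : ℝ) 1
    · simp [ht, quantile_le_iff ht]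
    · simp [ht, quantile]
  rw [this]
  exact (measurableSet_Ioo.inter measurableSet_Iic).union
    (measurableSet_Ioo.compl.inter (MeasurableSet.const _))

lemma map_quantile [IsProbabilityMeasure μ] : (Λ).map (quantile μ) = μ := by
  refine Measure.ext_of_Iic _ _ fun x => ?_
  have hpre : quantile μ ⁻¹' Iic x ∩ Ioo 0 1 = Iic (cdf μ x) ∩ Ioo 0 1 := by
    ext t
    simp only [mem_inter_iff, mem_preimage, mem_Iic]
    exact and_congr_left fun ht => quantile_le_iff ht
  rw [Measure.map_apply (measurable_quantile μ) measurableSet_Iic,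
    Measure.restrict_apply' measurableSet_Ioo, hpre, ← Measure.restrict_apply' measurableSet_Ioo,
    Measure.restrict_congr_set Ioo_ae_eq_Ioc, Measure.restrict_apply' measurableSet_Ioc,
    Iic_inter_Ioc_of_le (cdf_le_one μ x), Real.volume_Ioc, sub_zero, ofReal_cdf]

lemma lintegral_sq_quantile (μ : Measure ℝ) [IsProbabilityMeasure μ] :
    ∫⁻ t, ENNReal.ofReal (quantile μ t ^ 2) ∂Λ = ∫⁻ x, ENNReal.ofReal (x ^ 2) ∂μ := by
  conv_rhs => rw [← map_quantile (μ := μ)]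
  rw [lintegral_map (by fun_prop) (measurable_quantile μ)]

end Quantile

namespace StOrder

variable {μ ν : Measure ℝ}

lemma measureReal_Ioi_le (h : StOrder μ ν) (x : ℝ) : μ.real (Ioi x) ≤ ν.real (Ioi x) := by
  have hmono : Monotone ((Ioi x).indicator (1 : ℝ → ℝ)) := fun a b hab => by
    by_cases ha : a ∈ Ioi x
    · simp [ha, mem_Ioi.2 ((mem_Ioi.1 ha).trans_le hab)]
    · simp [indicator_of_notMem ha, indicator_nonneg]
  have hbdd : ∃ C : ℝ, ∀ y, |(Ioi x).indicator (1 : ℝ → ℝ) y| ≤ C :=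
    ⟨1, fun y => by by_cases hy : y ∈ Ioi x <;> simp [hy]⟩
  simpa only [integral_indicator_one measurableSet_Ioi] using h _ hmono hbdd

lemma cdf_le [IsProbabilityMeasure μ] [IsProbabilityMeasure ν] (h : StOrder μ ν) (x : ℝ) :
    cdf ν x ≤ cdf μ x := by
  have hcompl : ∀ ρ : Measure ℝ, [IsProbabilityMeasure ρ] → cdf ρ x = 1 - ρ.real (Ioi x) :=
    fun ρ _ => by rw [cdf_eq_real, ← compl_Iic, measureReal_compl measurableSet_Iic]; simp
  rw [hcompl μ, hcompl ν]
  linarith [h.measureReal_Ioi_le x]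

lemma quantile_le [IsProbabilityMeasure μ] [IsProbabilityMeasure ν] (h : StOrder μ ν) (t : ℝ) :
    quantile μ t ≤ quantile ν t :=
  quantile_le_quantile_of_cdf_le h.cdf_le t

end StOrder

lemma abs_quantile_le_of_stOrder {l μ u : Measure ℝ} [IsProbabilityMeasure l]
    [IsProbabilityMeasure μ] [IsProbabilityMeasure u] (hl : StOrder l μ) (hu : StOrder μ u)
    (t : ℝ) : |quantile μ t| ≤ max |quantile l t| |quantile u t| :=
  abs_le_max_abs_abs (hl.quantile_le t) (hu.quantile_le t)

lemma integrable_sq_iff_lintegral_ne_top {μ : Measure ℝ} :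
    Integrable (fun x : ℝ => x ^ 2) μ ↔ ∫⁻ x, ENNReal.ofReal (x ^ 2) ∂μ ≠ ∞ :=
  (lintegral_ofReal_ne_top_iff_integrable (continuous_pow 2).aestronglyMeasurable
    (ae_of_all _ fun x => sq_nonneg x)).symm

lemma lintegral_sq_ne_top_of_mem_P2 {μ : Measure ℝ} (hμ : μ ∈ P2) :
    ∫⁻ x, ENNReal.ofReal (x ^ 2) ∂μ ≠ ∞ :=
  integrable_sq_iff_lintegral_ne_top.1 hμ.2

lemma map_mem_P2 {Ω : Type*} [MeasurableSpace Ω] {m : Measure Ω} [IsProbabilityMeasure m]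
    {X : Ω → ℝ} (hX : Measurable X) (h : ∫⁻ ω, ENNReal.ofReal (X ω ^ 2) ∂m ≠ ∞) :
    m.map X ∈ P2 := by
  refine ⟨Measure.isProbabilityMeasure_map hX.aemeasurable,
    integrable_sq_iff_lintegral_ne_top.2 ?_⟩
  rwa [lintegral_map (by fun_prop) hX]

lemma sq_le_sq_of_abs_le {x y : ℝ} (h : |x| ≤ y) : x ^ 2 ≤ y ^ 2 :=
  sq_le_sq' (abs_le.1 h).1 (abs_le.1 h).2

section Tails

variable {α : Type*} [MeasurableSpace α]

lemma tendsto_setLIntegral_setOf_le_atTop (m : Measure α) [IsFiniteMeasure m] {f : α → ℝ≥0∞}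
    (hf : ∫⁻ t, f t ∂m ≠ ∞) {g : α → ℝ} (hg : Measurable g) :
    Tendsto (fun N : ℝ => ∫⁻ t in {t | N ≤ g t}, f t ∂m) atTop (𝓝 0) := by
  have hempty : ⋂ N : ℝ, {t | N ≤ g t} = ∅ :=
    eq_empty_of_forall_notMem fun t ht => (lt_add_one (g t)).not_ge (mem_iInter.1 ht (g t + 1))
  have hsmall : Tendsto (fun N : ℝ => m {t | N ≤ g t}) atTop (𝓝 0) := by
    simpa [hempty, Function.comp_def] using tendsto_measure_iInter_atTop (μ := m)
      (fun N => (measurableSet_le measurable_const hg).nullMeasurableSet)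
      (fun N N' h t (ht : N' ≤ g t) => h.trans ht) ⟨0, measure_ne_top m _⟩
  exact tendsto_setLIntegral_zero hf hsmall

lemma setLIntegral_tail_sq_map_le {m : Measure α} {X g : α → ℝ} (hX : Measurable X)
    (hXg : ∀ t, |X t| ≤ g t) (N : ℝ) :
    ∫⁻ x in {x : ℝ | N ≤ |x|}, ENNReal.ofReal (x ^ 2) ∂(m.map X) ≤
      ∫⁻ t in {t | N ≤ g t}, ENNReal.ofReal (g t ^ 2) ∂m := by
  rw [setLIntegral_map (measurableSet_le measurable_const continuous_abs.measurable)
    (by fun_prop) hX]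
  calc ∫⁻ t in X ⁻¹' {x | N ≤ |x|}, ENNReal.ofReal (X t ^ 2) ∂m
      ≤ ∫⁻ t in X ⁻¹' {x | N ≤ |x|}, ENNReal.ofReal (g t ^ 2) ∂m :=
        lintegral_mono fun t => ENNReal.ofReal_le_ofReal (sq_le_sq_of_abs_le (hXg t))
    _ ≤ ∫⁻ t in {t | N ≤ g t}, ENNReal.ofReal (g t ^ 2) ∂m :=
        lintegral_mono_set fun t ht => le_trans ht (hXg t)

lemma tendsto_iSup_tail_sq_of_dominated (m : Measure α) [IsFiniteMeasure m]
    {M : Set (Measure ℝ)} {X : Measure ℝ → α → ℝ} {g : α → ℝ} (hg : Measurable g)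
    (hg2 : ∫⁻ t, ENNReal.ofReal (g t ^ 2) ∂m ≠ ∞) (hX : ∀ μ, Measurable (X μ))
    (hlaw : ∀ μ ∈ M, m.map (X μ) = μ) (hXg : ∀ μ ∈ M, ∀ t, |X μ t| ≤ g t) :
    Tendsto (fun N : ℝ => ⨆ μ ∈ M, ∫⁻ x in {x : ℝ | N ≤ |x|}, ENNReal.ofReal (x ^ 2) ∂μ)
      atTop (𝓝 0) :=
  tendsto_of_tendsto_of_tendsto_of_le_of_le tendsto_const_nhds
    (tendsto_setLIntegral_setOf_le_atTop m hg2 hg) (fun _ => zero_le)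
    fun N => iSup₂_le fun μ hμ => hlaw μ hμ ▸ setLIntegral_tail_sq_map_le (hX μ) (hXg μ hμ) N

end Tails

lemma tight_of_tendsto_iSup_tail_sq {M : Set (Measure ℝ)}
    (h : Tendsto (fun N : ℝ => ⨆ μ ∈ M, ∫⁻ x in {x : ℝ | N ≤ |x|}, ENNReal.ofReal (x ^ 2) ∂μ)
      atTop (𝓝 0)) :
    ∀ ε : ℝ≥0∞, 0 < ε → ∃ N : ℝ, ∀ μ ∈ M, μ {x : ℝ | N ≤ |x|} ≤ ε := by
  intro ε hε
  obtain ⟨N, hle, hN⟩ := ((h.eventually (ge_mem_nhds hε)).and (eventually_ge_atTop 1)).exists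
  refine ⟨N, fun μ hμ => ?_⟩
  calc μ {x : ℝ | N ≤ |x|} = ∫⁻ x in {x : ℝ | N ≤ |x|}, 1 ∂μ := (setLIntegral_one _).symm
    _ ≤ ∫⁻ x in {x : ℝ | N ≤ |x|}, ENNReal.ofReal (x ^ 2) ∂μ := by
        refine setLIntegral_mono (by fun_prop) fun x hx => ?_
        rw [← ENNReal.ofReal_one, ← sq_abs]
        exact ENNReal.ofReal_le_ofReal (one_le_pow₀ (hN.trans hx))
    _ ≤ ε := (le_iSup₂ (f := fun μ _ => ∫⁻ x in {x : ℝ | N ≤ |x|}, ENNReal.ofReal (x ^ 2) ∂μ)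
        μ hμ).trans hle

lemma exists_subseq_tendsto_pi_of_abs_le {T : Type*} [Countable T] {F : ℕ → T → ℝ}
    {C : T → ℝ} (h : ∀ n q, |F n q| ≤ C q) :
    ∃ φ : ℕ → ℕ, StrictMono φ ∧ ∃ L : T → ℝ, ∀ q, Tendsto (fun n => F (φ n) q) atTop (𝓝 (L q)) := by
  have hS : IsSeqCompact (univ.pi fun q => Icc (-C q) (C q)) :=
    (isCompact_univ_pi fun q => isCompact_Icc).isSeqCompact
  obtain ⟨L, -, φ, hφ, hconv⟩ := hS fun n => mem_univ_pi.2 fun q => abs_le.1 (h n q)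
  exact ⟨φ, hφ, L, tendsto_pi_nhds.1 hconv⟩

/-- For monotone `L`, the left-continuous extension of `L` from the rationals of `(a, b)`. -/
def ratLeftSup (a : ℝ) (L : ℚ → ℝ) (t : ℝ) : ℝ :=
  sSup (L '' {q : ℚ | (q : ℝ) ∈ Ioo a t})

section Helly

variable {a b : ℝ} {Q : ℕ → ℝ → ℝ} {L : ℚ → ℝ}

lemma nonempty_ratLeftSup_set {t : ℝ} (ht : a < t) : (L '' {q : ℚ | (q : ℝ) ∈ Ioo a t}).Nonempty :=
  let ⟨q, hq⟩ := exists_rat_btwn ht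
  ⟨L q, q, hq, rfl⟩

variable (hmono : ∀ n, MonotoneOn (Q n) (Ioo a b))
  (hL : ∀ q : ℚ, (q : ℝ) ∈ Ioo a b → Tendsto (fun n => Q n q) atTop (𝓝 (L q)))
include hmono hL

lemma le_of_tendsto_rat {q r : ℚ} (hq : (q : ℝ) ∈ Ioo a b) (hr : (r : ℝ) ∈ Ioo a b)
    (hqr : (q : ℝ) ≤ r) : L q ≤ L r :=
  le_of_tendsto_of_tendsto' (hL q hq) (hL r hr) fun n => hmono n hq hr hqr

lemma bddAbove_ratLeftSup_set {t : ℝ} (ht : t ∈ Ioo a b) :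
    BddAbove (L '' {q : ℚ | (q : ℝ) ∈ Ioo a t}) := by
  obtain ⟨r, htr, hrb⟩ := exists_rat_btwn ht.2
  have hr : (r : ℝ) ∈ Ioo a b := ⟨ht.1.trans htr, hrb⟩
  exact ⟨L r, by
    rintro _ ⟨q, hq, rfl⟩
    exact le_of_tendsto_rat hmono hL ⟨hq.1, hq.2.trans ht.2⟩ hr (hq.2.trans htr).le⟩

lemma monotoneOn_ratLeftSup : MonotoneOn (ratLeftSup a L) (Ioo a b) := fun _ hs _ ht hst =>
  csSup_le_csSup (bddAbove_ratLeftSup_set hmono hL ht) (nonempty_ratLeftSup_set hs.1)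
    (image_mono fun _ hq => ⟨hq.1, hq.2.trans_le hst⟩)

lemma tendsto_ratLeftSup {t : ℝ} (ht : t ∈ Ioo a b)
    (hcont : ContinuousWithinAt (ratLeftSup a L) (Ioo a b) t) :
    Tendsto (fun n => Q n t) atTop (𝓝 (ratLeftSup a L t)) := by
  refine tendsto_order.2 ⟨fun c hc => ?_, fun c hc => ?_⟩
  · obtain ⟨_, ⟨q, hq, rfl⟩, hcq⟩ := exists_lt_of_lt_csSup (nonempty_ratLeftSup_set ht.1) hc
    have hq' : (q : ℝ) ∈ Ioo a b := ⟨hq.1, hq.2.trans ht.2⟩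
    filter_upwards [(hL q hq').eventually (eventually_gt_nhds hcq)] with n hn
    exact hn.trans_le (hmono n hq' ht hq.2.le)
  · have := left_nhdsWithin_Ioo_neBot ht.2
    obtain ⟨s, hsc, hs⟩ := (((hcont.mono (Ioo_subset_Ioo_left ht.1.le)).eventually
      (eventually_lt_nhds hc)).and self_mem_nhdsWithin).exists
    obtain ⟨q, htq, hqs⟩ := exists_rat_btwn hs.1
    have hq' : (q : ℝ) ∈ Ioo a b := ⟨ht.1.trans htq, hqs.trans hs.2⟩
    have hLq : L q < c := (le_csSup (bddAbove_ratLeftSup_set hmono hL ⟨ht.1.trans hs.1, hs.2⟩)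
      ⟨q, ⟨ht.1.trans htq, hqs⟩, rfl⟩).trans_lt hsc
    filter_upwards [(hL q hq').eventually (eventually_lt_nhds hLq)] with n hn
    exact (hmono n ht hq' htq.le).trans_lt hn

end Helly

/-- Helly's selection theorem. -/
theorem exists_subseq_tendsto_of_monotoneOn {a b : ℝ} {Q : ℕ → ℝ → ℝ} {g : ℝ → ℝ}
    (hmono : ∀ n, MonotoneOn (Q n) (Ioo a b)) (hbound : ∀ n, ∀ t ∈ Ioo a b, |Q n t| ≤ g t) :
    ∃ φ : ℕ → ℕ, StrictMono φ ∧ ∃ G : ℝ → ℝ,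
      {t ∈ Ioo a b | ¬Tendsto (fun n => Q (φ n) t) atTop (𝓝 (G t))}.Countable := by
  obtain ⟨φ, hφ, L, hL⟩ := exists_subseq_tendsto_pi_of_abs_le
    (F := fun n (q : ℚ) => (Ioo a b).indicator (Q n) q) (C := fun q => (Ioo a b).indicator g q)
    fun n q => by by_cases hq : (q : ℝ) ∈ Ioo a b <;> simp [hq, hbound]
  have hLQ : ∀ q : ℚ, (q : ℝ) ∈ Ioo a b → Tendsto (fun n => Q (φ n) q) atTop (𝓝 (L q)) :=
    fun q hq => by simpa [indicator_of_mem hq] using hL q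
  have hmono' : ∀ n, MonotoneOn (Q (φ n)) (Ioo a b) := fun n => hmono (φ n)
  refine ⟨φ, hφ, ratLeftSup a L,
    (monotoneOn_ratLeftSup hmono' hLQ).countable_not_continuousWithinAt.mono ?_⟩
  rintro t ⟨ht, hnot⟩
  exact ⟨ht, fun hc => hnot (tendsto_ratLeftSup hmono' hLQ ht hc)⟩

lemma exists_subseq_ae_tendsto_quantile {ρ : ℕ → Measure ℝ} {g : ℝ → ℝ}
    (hg : ∀ n t, |quantile (ρ n) t| ≤ g t) :
    ∃ φ : ℕ → ℕ, StrictMono φ ∧ ∃ X : ℝ → ℝ, Measurable X ∧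
      ∀ᵐ t ∂Λ, Tendsto (fun n => quantile (ρ (φ n)) t) atTop (𝓝 (X t)) := by
  obtain ⟨φ, hφ, G, hG⟩ := exists_subseq_tendsto_of_monotoneOn
    (fun n => monotoneOn_quantile (μ := ρ n)) (fun n t _ => hg n t)
  have hae : ∀ᵐ t ∂Λ, ∃ c, Tendsto (fun n => quantile (ρ (φ n)) t) atTop (𝓝 c) := by
    filter_upwards [ae_restrict_mem measurableSet_Ioo,
      ae_restrict_of_ae (measure_eq_zero_iff_ae_notMem.1 (hG.measure_zero volume))] with t ht hnot
    exact ⟨G t, not_not.1 fun h => hnot ⟨ht, h⟩⟩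
  obtain ⟨X, hXm, hX⟩ := measurable_limit_of_tendsto_metrizable_ae
    (fun n => (measurable_quantile _).aemeasurable) hae
  exact ⟨φ, hφ, X, hXm, hX⟩

section SecondMoments

variable {Ω : Type*} [MeasurableSpace Ω] {m : Measure Ω}

lemma lintegral_sq_ne_top_of_ae_abs_le {X g : Ω → ℝ} (hXg : ∀ᵐ ω ∂m, |X ω| ≤ g ω)
    (hg2 : ∫⁻ ω, ENNReal.ofReal (g ω ^ 2) ∂m ≠ ∞) : ∫⁻ ω, ENNReal.ofReal (X ω ^ 2) ∂m ≠ ∞ :=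
  ne_top_of_le_ne_top hg2 <| lintegral_mono_ae <| hXg.mono fun _ h =>
    ENNReal.ofReal_le_ofReal (sq_le_sq_of_abs_le h)

lemma lintegral_sq_max_abs_ne_top {X Y : Ω → ℝ} (hX : Measurable X)
    (hX2 : ∫⁻ ω, ENNReal.ofReal (X ω ^ 2) ∂m ≠ ∞) (hY2 : ∫⁻ ω, ENNReal.ofReal (Y ω ^ 2) ∂m ≠ ∞) :
    ∫⁻ ω, ENNReal.ofReal (max |X ω| |Y ω| ^ 2) ∂m ≠ ∞ := by
  have hle : ∀ ω, ENNReal.ofReal (max |X ω| |Y ω| ^ 2) ≤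
      ENNReal.ofReal (X ω ^ 2) + ENNReal.ofReal (Y ω ^ 2) := fun ω => by
    rw [← ENNReal.ofReal_add (sq_nonneg _) (sq_nonneg _)]
    refine ENNReal.ofReal_le_ofReal ?_
    rcases max_choice |X ω| |Y ω| with h | h <;> rw [h, sq_abs] <;>
      nlinarith [sq_nonneg (X ω), sq_nonneg (Y ω)]
  refine ne_top_of_le_ne_top ?_ (lintegral_mono hle)
  rw [lintegral_add_left (by fun_prop)]
  exact ENNReal.add_ne_top.2 ⟨hX2, hY2⟩

lemma ae_abs_le_of_tendsto {X : ℕ → Ω → ℝ} {Y g : Ω → ℝ} (hXg : ∀ n ω, |X n ω| ≤ g ω)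
    (hlim : ∀ᵐ ω ∂m, Tendsto (fun n => X n ω) atTop (𝓝 (Y ω))) : ∀ᵐ ω ∂m, |Y ω| ≤ g ω :=
  hlim.mono fun ω h => le_of_tendsto' h.abs fun n => hXg n ω

lemma tendsto_lintegral_sq_sub_of_dominated {X : ℕ → Ω → ℝ} {Y g : Ω → ℝ}
    (hX : ∀ n, Measurable (X n)) (hY : Measurable Y)
    (hg2 : ∫⁻ ω, ENNReal.ofReal (g ω ^ 2) ∂m ≠ ∞) (hXg : ∀ n ω, |X n ω| ≤ g ω)
    (hlim : ∀ᵐ ω ∂m, Tendsto (fun n => X n ω) atTop (𝓝 (Y ω))) :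
    Tendsto (fun n => ∫⁻ ω, ENNReal.ofReal ((X n ω - Y ω) ^ 2) ∂m) atTop (𝓝 0) := by
  have hYg := ae_abs_le_of_tendsto hXg hlim
  have hbound : ∀ n, ∀ᵐ ω ∂m,
      ENNReal.ofReal ((X n ω - Y ω) ^ 2) ≤ 4 * ENNReal.ofReal (g ω ^ 2) :=
    fun n => hYg.mono fun ω hY => by
      rw [← ENNReal.ofReal_ofNat, ← ENNReal.ofReal_mul (by norm_num)]
      refine ENNReal.ofReal_le_ofReal ?_
      have := abs_le.1 (hXg n ω)
      have := abs_le.1 hY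
      nlinarith
  have hpt : ∀ᵐ ω ∂m, Tendsto (fun n => ENNReal.ofReal ((X n ω - Y ω) ^ 2)) atTop (𝓝 0) :=
    hlim.mono fun ω h => by
      simpa [Function.comp_def] using
        (ENNReal.continuous_ofReal.tendsto _).comp ((h.sub_const (Y ω)).pow 2)
  simpa using tendsto_lintegral_of_dominated_convergence _ (fun n => by fun_prop) hbound
    (by rw [lintegral_const_mul' _ _ (by norm_num)]; exact ENNReal.mul_ne_top (by simp) hg2) hpt

end SecondMoments

/-- The law of `(X, Y)` is a coupling of the laws of `X` and `Y`. -/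
lemma W2_map_le {Ω : Type*} [MeasurableSpace Ω] (m : Measure Ω) {X Y : Ω → ℝ}
    (hX : Measurable X) (hY : Measurable Y) :
    W2 (m.map X) (m.map Y) ≤ (∫⁻ ω, ENNReal.ofReal ((X ω - Y ω) ^ 2) ∂m) ^ (1 / 2 : ℝ) := by
  have hXY : Measurable fun ω => (X ω, Y ω) := hX.prodMk hY
  refine iInf_le_of_le (m.map fun ω => (X ω, Y ω)) <| iInf_le_of_le ?_ <| iInf_le_of_le ?_ ?_
  · rw [Measure.map_map measurable_fst hXY]; rfl
  · rw [Measure.map_map measurable_snd hXY]; rfl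
  · rw [lintegral_map (by fun_prop) hXY]
    simp only [Real.rpow_two, sq_abs]
    norm_num

lemma W2Tendsto_map_of_dominated {Ω : Type*} [MeasurableSpace Ω] {m : Measure Ω}
    {X : ℕ → Ω → ℝ} {Y g : Ω → ℝ} (hX : ∀ n, Measurable (X n)) (hY : Measurable Y)
    (hg2 : ∫⁻ ω, ENNReal.ofReal (g ω ^ 2) ∂m ≠ ∞) (hXg : ∀ n ω, |X n ω| ≤ g ω)
    (hlim : ∀ᵐ ω ∂m, Tendsto (fun n => X n ω) atTop (𝓝 (Y ω))) :
    W2Tendsto (fun n => m.map (X n)) (m.map Y) := by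
  have hroot := ((ENNReal.continuous_rpow_const (y := 1 / 2)).tendsto 0).comp
    (tendsto_lintegral_sq_sub_of_dominated hX hY hg2 hXg hlim)
  rw [ENNReal.zero_rpow_of_pos (by norm_num)] at hroot
  exact tendsto_of_tendsto_of_tendsto_of_le_of_le tendsto_const_nhds hroot (fun _ => zero_le)
    fun n => W2_map_le m (hX n) hY

/-- An order bounded subset of `𝒫₂(ℝ)` is tight and 2-uniformly
integrable, hence relatively compact in the 2-Wasserstein space. -/
theorem order_bounded_implies_relatively_compact (M : Set (Measure ℝ)) (hM : M ⊆ P2)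
    (hob : ∃ l ∈ P2, ∃ u ∈ P2, ∀ μ ∈ M, StOrder l μ ∧ StOrder μ u) :
    -- tightness
    (∀ ε : ℝ≥0∞, 0 < ε → ∃ N : ℝ, ∀ μ ∈ M, μ {x : ℝ | N ≤ |x|} ≤ ε) ∧
    -- 2-uniform integrability
    Tendsto (fun N : ℝ => ⨆ μ ∈ M, ∫⁻ x in {x : ℝ | N ≤ |x|}, ENNReal.ofReal (x ^ 2) ∂μ)
      atTop (nhds 0) ∧
    -- relative compactness in (𝒫₂(ℝ), 𝒲₂)
    (∀ ρ : ℕ → Measure ℝ, (∀ n, ρ n ∈ M) →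
      ∃ (φ : ℕ → ℕ) (ν : Measure ℝ), StrictMono φ ∧ ν ∈ P2 ∧
        W2Tendsto (fun n => ρ (φ n)) ν) := by
  obtain ⟨l, hl, u, hu, hlu⟩ := hob
  have := hl.1
  have := hu.1
  have hprob (μ) (hμ : μ ∈ M) : IsProbabilityMeasure μ := (hM hμ).1
  set g : ℝ → ℝ := fun t => max |quantile l t| |quantile u t|
  have hdom (μ) (hμ : μ ∈ M) : ∀ t, |quantile μ t| ≤ g t :=
    have := hprob μ hμ
    abs_quantile_le_of_stOrder (hlu μ hμ).1 (hlu μ hμ).2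
  have hg2 : ∫⁻ t, ENNReal.ofReal (g t ^ 2) ∂Λ ≠ ∞ :=
    lintegral_sq_max_abs_ne_top (measurable_quantile l)
      (lintegral_sq_quantile l ▸ lintegral_sq_ne_top_of_mem_P2 hl)
      (lintegral_sq_quantile u ▸ lintegral_sq_ne_top_of_mem_P2 hu)
  have hui := tendsto_iSup_tail_sq_of_dominated Λ (by fun_prop) hg2 measurable_quantile
    (fun μ hμ => have := hprob μ hμ; map_quantile) hdom
  refine ⟨tight_of_tendsto_iSup_tail_sq hui, hui, fun ρ hρ => ?_⟩
  have hdomρ (n : ℕ) := hdom _ (hρ n)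
  obtain ⟨φ, hφ, X, hXm, hX⟩ := exists_subseq_ae_tendsto_quantile hdomρ
  have hlaw (n : ℕ) : (Λ).map (quantile (ρ (φ n))) = ρ (φ n) :=
    have := hprob _ (hρ (φ n))
    map_quantile
  refine ⟨φ, (Λ).map X, hφ, map_mem_P2 hXm (lintegral_sq_ne_top_of_ae_abs_le
    (ae_abs_le_of_tendsto (fun n => hdomρ (φ n)) hX) hg2), ?_⟩
  simpa only [hlaw] using W2Tendsto_map_of_dominated (fun n => measurable_quantile _) hXm hg2
    (fun n => hdomρ (φ n)) hX
end
end

section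
/- For probability measures on ℝ, if μ has finite first moment and ν has finite first moment, then μ ≤_st ν (tested against all bounded increasing functions) if and only if ∫ f dμ ≤ ∫ f dν for all 1-Lipschitz increasing functions f : ℝ → ℝ. -/
/-!
A monotone 1-Lipschitz function grows at most linearly, so it is integrable under measures with
finite first moment, and its truncations at `±n` are bounded monotone functions converging to it
under the domination by `|f|`.

Conversely, after rescaling, the Lipschitz test applies to monotone Lipschitz functions of any
constant. Steeper and steeper clamped ramps through the infimum of an upper set `S` converge
pointwise to its indicator, so `μ S ≤ ν S` for every upper set, and the layer-cake formula turns
this into the inequality for bounded monotone functions, shifted to be nonnegative.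
-/

open MeasureTheory Filter Set ENNReal

noncomputable section

open scoped NNReal Topology

section Ramp

def ramp (a c : ℝ) (n : ℕ) (x : ℝ) : ℝ := max 0 (min 1 ((n + 1) * (x - a) + c))

variable {a c x : ℝ} {n : ℕ}

lemma monotone_ramp : Monotone (ramp a c n) := fun x y hxy => by
  unfold ramp; gcongr

lemma lipschitzWith_ramp : LipschitzWith (n + 1) (ramp a c n) := by
  have : LipschitzWith (n + 1) fun x : ℝ => (n + 1) * (x - a) + c :=
    LipschitzWith.of_dist_le_mul fun x y => by
      rw [Real.dist_eq, Real.dist_eq, add_sub_add_right_eq_sub, ← mul_sub, sub_sub_sub_cancel_right,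
        abs_mul, abs_of_pos (by positivity)]
      simp
  exact (this.const_min 1).const_max 0

lemma ramp_nonneg : 0 ≤ ramp a c n x := le_max_left _ _

lemma ramp_le_one : ramp a c n x ≤ 1 := max_le zero_le_one (min_le_left _ _)

lemma ramp_self (hc : c ∈ Icc (0 : ℝ) 1) : ramp a c n a = c := by
  simp [ramp, min_eq_right hc.2, max_eq_right hc.1]

lemma tendsto_ramp_of_lt (h : a < x) : Tendsto (fun n => ramp a c n x) atTop (𝓝 1) := by
  have : Tendsto (fun n : ℕ => ((n : ℝ) + 1) * (x - a) + c) atTop atTop :=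
    tendsto_atTop_add_const_right _ c <|
      (tendsto_atTop_add_const_right _ 1 tendsto_natCast_atTop_atTop).atTop_mul_const (sub_pos.2 h)
  refine tendsto_const_nhds.congr' ?_
  filter_upwards [this.eventually_ge_atTop 1] with n hn
  simp [ramp, min_eq_left hn]

lemma tendsto_ramp_of_gt (h : x < a) : Tendsto (fun n => ramp a c n x) atTop (𝓝 0) := by
  have : Tendsto (fun n : ℕ => ((n : ℝ) + 1) * (x - a) + c) atTop atBot :=
    tendsto_atBot_add_const_right _ c <|
      (tendsto_atTop_add_const_right _ 1 tendsto_natCast_atTop_atTop).atTop_mul_const_of_neg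
        (sub_neg.2 h)
  refine tendsto_const_nhds.congr' ?_
  filter_upwards [this.eventually_le_atBot 0] with n hn
  simp [ramp, max_eq_left ((min_le_right _ _).trans hn)]

/-- An upper set lies between `Ioi (sInf S)` and `Ici (sInf S)`, so only the value of the limit
at `sInf S` itself has to be prescribed, through the offset `c`. -/
lemma IsUpperSet.tendsto_ramp_indicator {S : Set ℝ} (hS : IsUpperSet S) (hne : S.Nonempty)
    (hbdd : BddBelow S) (x : ℝ) :
    Tendsto (fun n => ramp (sInf S) (S.indicator 1 (sInf S)) n x) atTop
      (𝓝 (S.indicator 1 x)) := by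
  rcases lt_trichotomy x (sInf S) with hx | rfl | hx
  · rw [indicator_of_notMem fun hxS => hx.not_ge (csInf_le hbdd hxS)]
    exact tendsto_ramp_of_gt hx
  · refine tendsto_const_nhds.congr fun n => (ramp_self ?_).symm
    by_cases h : sInf S ∈ S <;> simp [h]
  · obtain ⟨s, hs, hsx⟩ := exists_lt_of_csInf_lt hne hx
    rw [indicator_of_mem (hS hsx.le hs)]
    exact tendsto_ramp_of_lt hx

end Ramp

section LipschitzTest

variable {μ ν : Measure ℝ}

lemma integral_le_of_monotone_lipschitzWith
    (hLip : ∀ f : ℝ → ℝ, Monotone f → LipschitzWith 1 f → ∫ x, f x ∂μ ≤ ∫ x, f x ∂ν)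
    {f : ℝ → ℝ} {K : ℝ≥0} (hf : Monotone f) (hK : LipschitzWith K f) :
    ∫ x, f x ∂μ ≤ ∫ x, f x ∂ν := by
  have hpos : (0 : ℝ) < K + 1 := by positivity
  have hscaled : LipschitzWith 1 fun x => (K + 1 : ℝ)⁻¹ * f x :=
    LipschitzWith.of_dist_le_mul fun x y => by
      rw [Real.dist_eq, ← mul_sub, abs_mul, abs_of_pos (inv_pos.2 hpos), NNReal.coe_one, one_mul,
        inv_mul_le_iff₀ hpos, ← Real.dist_eq]
      exact (hK.dist_le_mul x y).trans (by gcongr; linarith)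
  have := hLip _ (hf.const_mul (inv_pos.2 hpos).le) hscaled
  rwa [integral_const_mul, integral_const_mul, mul_le_mul_iff_of_pos_left (inv_pos.2 hpos)] at this

lemma measure_le_of_tendsto_indicator [IsFiniteMeasure μ] [IsFiniteMeasure ν]
    (hLip : ∀ f : ℝ → ℝ, Monotone f → LipschitzWith 1 f → ∫ x, f x ∂μ ≤ ∫ x, f x ∂ν)
    {S : Set ℝ} (hS : MeasurableSet S) {f : ℕ → ℝ → ℝ} {K : ℕ → ℝ≥0}
    (hf : ∀ n, Monotone (f n)) (hK : ∀ n, LipschitzWith (K n) (f n))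
    (hf01 : ∀ n x, f n x ∈ Icc (0 : ℝ) 1)
    (hlim : ∀ x, Tendsto (fun n => f n x) atTop (𝓝 (S.indicator 1 x))) :
    μ S ≤ ν S := by
  have hconv : ∀ (m : Measure ℝ) [IsFiniteMeasure m],
      Tendsto (fun n => ∫ x, f n x ∂m) atTop (𝓝 (m.real S)) := by
    intro m _
    rw [← integral_indicator_one hS]
    refine tendsto_integral_of_dominated_convergence (fun _ => 1)
      (fun n => (hK n).continuous.aestronglyMeasurable) (integrable_const 1)
      (fun n => ae_of_all _ fun x => ?_) (ae_of_all _ hlim)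
    rw [Real.norm_of_nonneg (hf01 n x).1]
    exact (hf01 n x).2
  have := le_of_tendsto_of_tendsto' (hconv μ) (hconv ν) fun n =>
    integral_le_of_monotone_lipschitzWith hLip (hf n) (hK n)
  exact (ENNReal.toReal_le_toReal (measure_ne_top μ S) (measure_ne_top ν S)).1 this

lemma measure_le_of_isUpperSet [IsFiniteMeasure μ] [IsFiniteMeasure ν]
    (hLip : ∀ f : ℝ → ℝ, Monotone f → LipschitzWith 1 f → ∫ x, f x ∂μ ≤ ∫ x, f x ∂ν)
    {S : Set ℝ} (hS : IsUpperSet S) : μ S ≤ ν S := by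
  rcases S.eq_empty_or_nonempty with rfl | hne
  · simp
  by_cases hbdd : BddBelow S
  · exact measure_le_of_tendsto_indicator hLip hS.ordConnected.measurableSet
      (fun _ => monotone_ramp) (fun _ => lipschitzWith_ramp) (fun _ _ => ⟨ramp_nonneg, ramp_le_one⟩)
      (hS.tendsto_ramp_indicator hne hbdd)
  · have hS_univ : S = univ := eq_univ_of_forall fun x =>
      let ⟨s, hs, hsx⟩ := not_bddBelow_iff.1 hbdd x
      hS hsx.le hs
    subst hS_univ
    exact measure_le_of_tendsto_indicator hLip MeasurableSet.univ (f := fun _ _ => 1)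
      (fun _ => monotone_const) (fun _ => LipschitzWith.const 1) (fun _ _ => ⟨zero_le_one, le_rfl⟩)
      (fun x => by simp)

end LipschitzTest

section LayerCake

variable {μ ν : Measure ℝ}

lemma lintegral_le_of_forall_isUpperSet (hS : ∀ S : Set ℝ, IsUpperSet S → μ S ≤ ν S)
    {h : ℝ → ℝ} (hh : Monotone h) (hh0 : ∀ x, 0 ≤ h x) :
    ∫⁻ x, ENNReal.ofReal (h x) ∂μ ≤ ∫⁻ x, ENNReal.ofReal (h x) ∂ν := by
  rw [lintegral_eq_lintegral_meas_lt μ (ae_of_all _ hh0) hh.measurable.aemeasurable,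
    lintegral_eq_lintegral_meas_lt ν (ae_of_all _ hh0) hh.measurable.aemeasurable]
  exact lintegral_mono fun t => hS _ fun x y hxy hx => hx.trans_le (hh hxy)

lemma integral_le_of_forall_isUpperSet (hS : ∀ S : Set ℝ, IsUpperSet S → μ S ≤ ν S)
    {h : ℝ → ℝ} (hh : Monotone h) (hh0 : ∀ x, 0 ≤ h x) (hhν : Integrable h ν) :
    ∫ x, h x ∂μ ≤ ∫ x, h x ∂ν := by
  rw [integral_eq_lintegral_of_nonneg_ae (ae_of_all _ hh0) hh.measurable.aestronglyMeasurable,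
    integral_eq_lintegral_of_nonneg_ae (ae_of_all _ hh0) hh.measurable.aestronglyMeasurable]
  exact ENNReal.toReal_mono hhν.lintegral_lt_top.ne (lintegral_le_of_forall_isUpperSet hS hh hh0)

lemma stOrder_of_forall_isUpperSet [IsProbabilityMeasure μ] [IsProbabilityMeasure ν]
    (hS : ∀ S : Set ℝ, IsUpperSet S → μ S ≤ ν S) : StOrder μ ν := by
  rintro g hg ⟨C, hC⟩
  have hint : ∀ (m : Measure ℝ) [IsProbabilityMeasure m], Integrable g m := fun m _ =>
    .of_bound hg.measurable.aestronglyMeasurable C (ae_of_all _ hC)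
  have hshift : ∀ (m : Measure ℝ) [IsProbabilityMeasure m],
      ∫ x, g x + C ∂m = ∫ x, g x ∂m + C := fun m _ => by
    simp [integral_add (hint m) (integrable_const C)]
  have hle := integral_le_of_forall_isUpperSet hS (h := fun x => g x + C)
    (fun x y hxy => by simpa using hg hxy) (fun x => by linarith [neg_abs_le (g x), hC x])
    ((hint ν).add (integrable_const C))
  rw [hshift, hshift] at hle
  linarith

end LayerCake

lemma StOrder.integral_le {μ ν : Measure ℝ} (hst : StOrder μ ν) {f : ℝ → ℝ} (hf : Monotone f)
    (hfμ : Integrable f μ) (hfν : Integrable f ν) : ∫ x, f x ∂μ ≤ ∫ x, f x ∂ν := by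
  set F : ℕ → ℝ → ℝ := fun n x => max (-n) (min n (f x))
  have hF_mono : ∀ n, Monotone (F n) := fun n x y hxy =>
    max_le_max le_rfl (min_le_min le_rfl (hf hxy))
  have hF_le : ∀ n x, |F n x| ≤ |f x| := fun n x => by
    have : (0 : ℝ) ≤ n := n.cast_nonneg
    exact abs_le.2 ⟨le_max_of_le_right (le_min (by linarith [abs_nonneg (f x)]) (neg_abs_le _)),
      max_le (by linarith [abs_nonneg (f x)]) ((min_le_right _ _).trans (le_abs_self _))⟩
  have hlim : ∀ x, Tendsto (fun n => F n x) atTop (𝓝 (f x)) := fun x => by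
    refine tendsto_const_nhds.congr' ?_
    filter_upwards [eventually_ge_atTop ⌈|f x|⌉₊] with n hn
    have := (Nat.le_ceil |f x|).trans (Nat.cast_le.2 hn)
    simp [F, min_eq_right (le_of_abs_le this), max_eq_right (neg_le_of_abs_le this)]
  have hconv : ∀ m : Measure ℝ, Integrable f m →
      Tendsto (fun n => ∫ x, F n x ∂m) atTop (𝓝 (∫ x, f x ∂m)) := fun m hfm =>
    tendsto_integral_of_dominated_convergence (fun x => ‖f x‖)
      (fun n => (hF_mono n).measurable.aestronglyMeasurable) hfm.norm
      (fun n => ae_of_all _ (hF_le n)) (ae_of_all _ hlim)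
  refine le_of_tendsto_of_tendsto' (hconv μ hfμ) (hconv ν hfν) fun n =>
    hst (F n) (hF_mono n) ⟨n, fun x => ?_⟩
  exact abs_le.2 ⟨le_max_left _ _, max_le (by simp) (min_le_left _ _)⟩

lemma LipschitzWith.integrable_of_integrable_abs {μ : Measure ℝ} [IsFiniteMeasure μ]
    {f : ℝ → ℝ} {K : ℝ≥0} (hf : LipschitzWith K f) (hμ : Integrable (fun x => |x|) μ) :
    Integrable f μ := by
  refine ((integrable_const |f 0|).add (hμ.const_mul K)).mono' hf.continuous.aestronglyMeasurable
    (ae_of_all _ fun x => ?_)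
  have := hf.dist_le_mul x 0
  rw [Real.dist_eq, Real.dist_eq, sub_zero] at this
  show |f x| ≤ |f 0| + K * |x|
  linarith [abs_sub_abs_le_abs_sub (f x) (f 0)]

/-- For probability measures with finite first moments, the stochastic order
can equivalently be tested against 1-Lipschitz increasing functions. -/
theorem stochastic_order_iff_lipschitz_test (μ ν : Measure ℝ)
    [IsProbabilityMeasure μ] [IsProbabilityMeasure ν]
    (hμ : Integrable (fun x : ℝ => |x|) μ) (hν : Integrable (fun x : ℝ => |x|) ν) :
    StOrder μ ν ↔
      ∀ f : ℝ → ℝ, Monotone f → LipschitzWith 1 f →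
        ∫ x, f x ∂μ ≤ ∫ x, f x ∂ν :=
  ⟨fun hst _ hf hlip => hst.integral_le hf (hlip.integrable_of_integrable_abs hμ)
      (hlip.integrable_of_integrable_abs hν),
    fun hLip => stOrder_of_forall_isUpperSet fun _ hS => measure_le_of_isUpperSet hLip hS⟩
end
end

section
/- For any probability measure μ ∈ 𝒫₂(ℝ) and any nonempty open set U ⊂ 𝒫₂(ℝ) in the 2-Wasserstein topology, there exists ν ∈ U such that μ and ν are order unrelated with respect to the stochastic order: neither μ ≤_st ν nor ν ≤_st μ holds. In particular, every order interval in 𝒫₂(ℝ) has empty interior. -/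
/-!
Move mass `ε` of `ν₀` onto each of the atoms `-a` and `a`. Coupling the moved mass independently
with `ν₀` shows that this costs `W₂² ≤ ε (4 a² + 4 ∫ y² dν₀)`. If `μ {|x| ≥ a} < ε`, the perturbed
measure charges both `(-∞, -a]` and `[a, ∞)` more than `μ` does, so testing the stochastic order
against the indicators of these lower and upper sets shows that it relates the two measures in
neither direction. Since `μ` has a finite second moment, Chebyshev's inequality allows such an `ε`
with `ε a² → 0`, which puts the perturbation in any `W₂`-ball around `ν₀`.
-/

open MeasureTheory Filter Set ENNReal

noncomputable section

open Topology

lemma StOrder.measureReal_le_of_isUpperSet {μ ν : Measure ℝ} (h : StOrder μ ν) {s : Set ℝ}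
    (hs : IsUpperSet s) (hsm : MeasurableSet s) : μ.real s ≤ ν.real s := by
  have hmono : Monotone (s.indicator fun _ => (1 : ℝ)) := fun x y hxy => by
    by_cases hx : x ∈ s
    · simp [hx, hs hxy hx]
    · simp [hx, indicator_nonneg]
  have hbdd : ∀ x, |s.indicator (fun _ => (1 : ℝ)) x| ≤ 1 := fun x => by
    by_cases hx : x ∈ s <;> simp [hx]
  simpa [integral_indicator_const _ hsm] using h _ hmono ⟨1, hbdd⟩

lemma StOrder.measureReal_le_of_isLowerSet {μ ν : Measure ℝ} (h : StOrder μ ν) {s : Set ℝ}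
    (hs : IsLowerSet s) (hsm : MeasurableSet s) : ν.real s ≤ μ.real s := by
  have hmono : Monotone fun x => -s.indicator (fun _ => (1 : ℝ)) x := fun x y hxy => by
    by_cases hy : y ∈ s
    · simp [hy, hs hxy hy]
    · simp [hy, indicator_nonneg]
  have hbdd : ∀ x, |-s.indicator (fun _ => (1 : ℝ)) x| ≤ 1 := fun x => by
    by_cases hx : x ∈ s <;> simp [hx]
  simpa [integral_neg, integral_indicator_const _ hsm] using h _ hmono ⟨1, hbdd⟩

lemma W2_le_of_map_fst_of_map_snd {μ ν : Measure ℝ} (π : Measure (ℝ × ℝ))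
    (h₁ : π.map Prod.fst = μ) (h₂ : π.map Prod.snd = ν) :
    W2 μ ν ≤ (∫⁻ q, ENNReal.ofReal ((q.1 - q.2) ^ 2) ∂π) ^ (1 / 2 : ℝ) := by
  have hcost : ∀ q : ℝ × ℝ, |q.1 - q.2| ^ (2 : ℝ) = (q.1 - q.2) ^ 2 := fun q => by
    rw [Real.rpow_two, sq_abs]
  simp_rw [← hcost]
  exact (iInf_le _ π).trans ((iInf_le _ h₁).trans (iInf_le _ h₂))

lemma W2_smul_add_le (ν ρ : Measure ℝ) [IsProbabilityMeasure ν] [SFinite ρ] {s : ℝ≥0∞}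
    (hs : s + ρ univ = 1) :
    W2 (s • ν + ρ) ν ≤ (∫⁻ x, ∫⁻ y, ENNReal.ofReal ((x - y) ^ 2) ∂ν ∂ρ) ^ (1 / 2 : ℝ) := by
  have hdiag : Measurable fun x : ℝ => (x, x) := measurable_id.prodMk measurable_id
  have hcost : Measurable fun q : ℝ × ℝ => ENNReal.ofReal ((q.1 - q.2) ^ 2) := by fun_prop
  -- keep the mass `s • ν` in place and couple `ρ` independently with `ν`
  refine (W2_le_of_map_fst_of_map_snd (s • ν.map (fun x => (x, x)) + ρ.prod ν) ?_ ?_).trans_eq ?_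
  · rw [Measure.map_add _ _ measurable_fst, Measure.map_smul, Measure.map_map measurable_fst hdiag]
    simp [Function.comp_def]
  · rw [Measure.map_add _ _ measurable_snd, Measure.map_smul, Measure.map_map measurable_snd hdiag]
    simp [Function.comp_def, ← add_smul, hs]
  · rw [lintegral_add_measure, lintegral_smul_measure, lintegral_map hcost hdiag,
      lintegral_prod _ hcost.aemeasurable]
    simp

lemma tendsto_setIntegral_abs_ge {μ : Measure ℝ} {f : ℝ → ℝ} (hf : Integrable f μ) :
    Tendsto (fun a => ∫ x in {x | a ≤ |x|}, f x ∂μ) atTop (𝓝 0) := by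
  have hempty : ⋂ a : ℝ, {x : ℝ | a ≤ |x|} = ∅ :=
    eq_empty_of_forall_notMem fun x hx => absurd (mem_iInter.1 hx (|x| + 1)) (by simp)
  simpa [hempty] using tendsto_setIntegral_of_antitone (s := fun a : ℝ => {x : ℝ | a ≤ |x|})
    (fun a => measurableSet_le measurable_const measurable_abs)
    (fun a b hab x (hx : b ≤ |x|) => hab.trans hx) ⟨0, hf.integrableOn⟩

lemma sq_mul_measureReal_abs_ge_le {μ : Measure ℝ} [IsFiniteMeasure μ]
    (hμ : Integrable (fun x => x ^ 2) μ) {a : ℝ} (ha : 0 ≤ a) :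
    a ^ 2 * μ.real {x | a ≤ |x|} ≤ ∫ x in {x | a ≤ |x|}, x ^ 2 ∂μ :=
  setIntegral_ge_of_const_le_real (measurableSet_le measurable_const measurable_abs)
    (measure_ne_top _ _) (fun x hx => sq_abs x ▸ pow_le_pow_left₀ ha hx 2) hμ.integrableOn

/-- By Chebyshev this dominates `μ {x | a ≤ |x|}`, while `a ^ 2 * tailWeight μ a → 0`. -/
def tailWeight (μ : Measure ℝ) (a : ℝ) : ℝ :=
  (∫ x in {x | a ≤ |x|}, x ^ 2 ∂μ + a⁻¹) * a⁻¹ ^ 2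

lemma measureReal_abs_ge_lt_tailWeight {μ : Measure ℝ} [IsFiniteMeasure μ]
    (hμ : Integrable (fun x => x ^ 2) μ) {a : ℝ} (ha : 0 < a) :
    μ.real {x | a ≤ |x|} < tailWeight μ a :=
  calc μ.real {x | a ≤ |x|} = a ^ 2 * μ.real {x | a ≤ |x|} * a⁻¹ ^ 2 := by field_simp
    _ ≤ (∫ x in {x | a ≤ |x|}, x ^ 2 ∂μ) * a⁻¹ ^ 2 := by
      gcongr; exact sq_mul_measureReal_abs_ge_le hμ ha.le
    _ < tailWeight μ a := by unfold tailWeight; gcongr; exact lt_add_of_pos_right _ (inv_pos.2 ha)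

lemma tendsto_tailWeight {μ : Measure ℝ} (hμ : Integrable (fun x => x ^ 2) μ) :
    Tendsto (tailWeight μ) atTop (𝓝 0) := by
  have hinv := tendsto_inv_atTop_zero (𝕜 := ℝ)
  have hlim := ((tendsto_setIntegral_abs_ge hμ).add hinv).mul (hinv.pow 2)
  rwa [add_zero, zero_mul] at hlim

lemma tendsto_tailWeight_mul {μ : Measure ℝ} (hμ : Integrable (fun x => x ^ 2) μ) (C : ℝ) :
    Tendsto (fun a => tailWeight μ a * (4 * a ^ 2 + C)) atTop (𝓝 0) := by
  have hinv := tendsto_inv_atTop_zero (𝕜 := ℝ)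
  have hlim := ((tendsto_setIntegral_abs_ge hμ).add hinv).mul
    ((tendsto_const_nhds (x := 4)).add ((hinv.pow 2).const_mul C))
  rw [zero_add, zero_mul] at hlim
  refine hlim.congr' ((eventually_ne_atTop 0).mono fun a ha => ?_)
  unfold tailWeight
  field_simp

def atomPerturbation (ν : Measure ℝ) (ε a : ℝ) : Measure ℝ :=
  ENNReal.ofReal (1 - 2 * ε) • ν + ENNReal.ofReal ε • (Measure.dirac (-a) + Measure.dirac a)

namespace atomPerturbation

variable {ν : Measure ℝ} {ε a : ℝ}

instance [IsFiniteMeasure ν] : IsFiniteMeasure (atomPerturbation ν ε a) := by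
  have := ν.smul_finite (ENNReal.ofReal_ne_top (r := 1 - 2 * ε))
  have := (Measure.dirac (-a) + Measure.dirac a).smul_finite (ENNReal.ofReal_ne_top (r := ε))
  unfold atomPerturbation
  infer_instance

lemma ofReal_add_atoms_univ (hε : 0 ≤ ε) (hε' : 2 * ε ≤ 1) :
    ENNReal.ofReal (1 - 2 * ε) + (ENNReal.ofReal ε • (Measure.dirac (-a) + Measure.dirac a)) univ
      = 1 := by
  rw [Measure.smul_apply, Measure.add_apply, measure_univ, measure_univ, smul_eq_mul, mul_add,
    mul_one, ← ENNReal.ofReal_add hε hε, ← ENNReal.ofReal_add (by linarith) (by linarith)]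
  ring_nf
  exact ENNReal.ofReal_one

lemma isProbabilityMeasure [IsProbabilityMeasure ν] (hε : 0 ≤ ε) (hε' : 2 * ε ≤ 1) :
    IsProbabilityMeasure (atomPerturbation ν ε a) := by
  constructor
  rw [atomPerturbation, Measure.add_apply, Measure.smul_apply, measure_univ, smul_eq_mul, mul_one]
  exact ofReal_add_atoms_univ hε hε'

lemma mem_P2 (hν : ν ∈ P2) (hε : 0 ≤ ε) (hε' : 2 * ε ≤ 1) : atomPerturbation ν ε a ∈ P2 := by
  obtain ⟨hνp, hν2⟩ := hν
  refine ⟨isProbabilityMeasure hε hε', ?_⟩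
  unfold atomPerturbation
  exact (hν2.smul_measure ENNReal.ofReal_ne_top).add_measure
    (((integrable_dirac enorm_lt_top).add_measure (integrable_dirac enorm_lt_top)).smul_measure
      ENNReal.ofReal_ne_top)

lemma le_measureReal [IsFiniteMeasure ν] (hε : 0 ≤ ε) {s : Set ℝ} (hs : -a ∈ s ∨ a ∈ s) :
    ε ≤ (atomPerturbation ν ε a).real s := by
  have hatoms : 1 ≤ (Measure.dirac (-a) + Measure.dirac a) s := by
    rcases hs with hs | hs
    · exact (Measure.dirac_apply_of_mem hs).ge.trans le_self_add
    · exact (Measure.dirac_apply_of_mem hs).ge.trans le_add_self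
  have hle : ENNReal.ofReal ε ≤ atomPerturbation ν ε a s :=
    calc ENNReal.ofReal ε ≤ (ENNReal.ofReal ε • (Measure.dirac (-a) + Measure.dirac a)) s := by
          rw [Measure.smul_apply, smul_eq_mul]
          exact le_mul_of_one_le_right zero_le hatoms
      _ ≤ atomPerturbation ν ε a s := le_add_self
  simpa [measureReal_def, hε] using ENNReal.toReal_mono (measure_ne_top _ _) hle

end atomPerturbation

lemma lintegral_ofReal_sub_sq_le {ν : Measure ℝ} [IsProbabilityMeasure ν]
    (hν : Integrable (fun y => y ^ 2) ν) (x : ℝ) :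
    ∫⁻ y, ENNReal.ofReal ((x - y) ^ 2) ∂ν ≤ ENNReal.ofReal (2 * x ^ 2 + 2 * ∫ y, y ^ 2 ∂ν) := by
  have hint : Integrable (fun y => 2 * x ^ 2 + 2 * y ^ 2) ν :=
    (integrable_const _).add (hν.const_mul 2)
  calc ∫⁻ y, ENNReal.ofReal ((x - y) ^ 2) ∂ν
      ≤ ∫⁻ y, ENNReal.ofReal (2 * x ^ 2 + 2 * y ^ 2) ∂ν :=
        lintegral_mono fun y => ENNReal.ofReal_le_ofReal (by nlinarith [sq_nonneg (x + y)])
    _ = ENNReal.ofReal (2 * x ^ 2 + 2 * ∫ y, y ^ 2 ∂ν) := by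
        rw [← ofReal_integral_eq_lintegral_ofReal hint (.of_forall fun y => by positivity),
          integral_add (integrable_const _) (hν.const_mul 2), integral_const, integral_const_mul]
        simp

lemma W2_atomPerturbation_le {ν : Measure ℝ} [IsProbabilityMeasure ν]
    (hν : Integrable (fun y => y ^ 2) ν) {ε : ℝ} (a : ℝ) (hε : 0 ≤ ε) (hε' : 2 * ε ≤ 1) :
    W2 (atomPerturbation ν ε a) ν
      ≤ ENNReal.ofReal (ε * (4 * a ^ 2 + 4 * ∫ y, y ^ 2 ∂ν)) ^ (1 / 2 : ℝ) := by
  refine (W2_smul_add_le ν _ (atomPerturbation.ofReal_add_atoms_univ hε hε')).trans ?_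
  gcongr
  rw [lintegral_smul_measure, lintegral_add_measure, lintegral_dirac, lintegral_dirac,
    smul_eq_mul]
  calc ENNReal.ofReal ε * (∫⁻ y, ENNReal.ofReal ((-a - y) ^ 2) ∂ν
        + ∫⁻ y, ENNReal.ofReal ((a - y) ^ 2) ∂ν)
      ≤ ENNReal.ofReal ε * (ENNReal.ofReal (2 * (-a) ^ 2 + 2 * ∫ y, y ^ 2 ∂ν)
        + ENNReal.ofReal (2 * a ^ 2 + 2 * ∫ y, y ^ 2 ∂ν)) := by
        gcongr <;> exact lintegral_ofReal_sub_sq_le hν _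
    _ = ENNReal.ofReal (ε * (4 * a ^ 2 + 4 * ∫ y, y ^ 2 ∂ν)) := by
        have hC : 0 ≤ ∫ y, y ^ 2 ∂ν := integral_nonneg fun y => sq_nonneg y
        rw [← ENNReal.ofReal_add (by positivity) (by positivity), ← ENNReal.ofReal_mul hε]
        ring_nf

theorem exists_not_stOrder_W2_lt {μ ν₀ : Measure ℝ} (hμ : μ ∈ P2) (hν₀ : ν₀ ∈ P2) {δ : ℝ≥0∞}
    (hδ : 0 < δ) : ∃ ν ∈ P2, W2 ν ν₀ < δ ∧ ¬ StOrder μ ν ∧ ¬ StOrder ν μ := by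
  obtain ⟨hμp, hμ2⟩ := hμ
  obtain ⟨hν₀p, hν₀2⟩ := hν₀
  have hcost : Tendsto (fun a => ENNReal.ofReal
      (tailWeight μ a * (4 * a ^ 2 + 4 * ∫ y, y ^ 2 ∂ν₀)) ^ (1 / 2 : ℝ)) atTop (𝓝 0) := by
    have h := ((ENNReal.continuous_rpow_const (y := 1 / 2)).tendsto _).comp
      (ENNReal.tendsto_ofReal (tendsto_tailWeight_mul hμ2 (4 * ∫ y, y ^ 2 ∂ν₀)))
    rwa [ENNReal.ofReal_zero, ENNReal.zero_rpow_of_pos one_half_pos] at h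
  obtain ⟨a, ha, hε_half, hW⟩ := ((eventually_gt_atTop 0).and
    (((tendsto_tailWeight hμ2).eventually (ge_mem_nhds one_half_pos)).and
      (hcost.eventually (gt_mem_nhds hδ)))).exists
  set ε := tailWeight μ a
  have htail : μ.real {x | a ≤ |x|} < ε := measureReal_abs_ge_lt_tailWeight hμ2 ha
  have hε : 0 ≤ ε := measureReal_nonneg.trans htail.le
  refine ⟨atomPerturbation ν₀ ε a, atomPerturbation.mem_P2 ⟨hν₀p, hν₀2⟩ hε (by linarith),
    (W2_atomPerturbation_le hν₀2 a hε (by linarith)).trans_lt hW, fun h => ?_, fun h => ?_⟩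
  · have hlow := h.measureReal_le_of_isLowerSet (isLowerSet_Iic (-a)) measurableSet_Iic
    have hsub : Iic (-a) ⊆ {x | a ≤ |x|} := fun x (hx : x ≤ -a) =>
      show a ≤ |x| by linarith [neg_le_abs x]
    linarith [measureReal_mono hsub (μ := μ), atomPerturbation.le_measureReal (ν := ν₀) hε
      (s := Iic (-a)) (.inl self_mem_Iic)]
  · have hup := h.measureReal_le_of_isUpperSet (isUpperSet_Ici a) measurableSet_Ici
    have hsub : Ici a ⊆ {x | a ≤ |x|} := fun x (hx : a ≤ x) => hx.trans (le_abs_self x)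
    linarith [measureReal_mono hsub (μ := μ), atomPerturbation.le_measureReal (ν := ν₀) hε
      (s := Ici a) (.inr self_mem_Ici)]

/-- For any `μ ∈ 𝒫₂(ℝ)` and any nonempty open set in the 2-Wasserstein
topology (equivalently, any 𝒲₂-ball `B(ν₀,δ)`), there is a `ν` in it that is order
unrelated to `μ`. In particular, every order interval in `𝒫₂(ℝ)` has empty interior. -/
theorem no_strong_order (μ : Measure ℝ) (hμ : μ ∈ P2)
    (ν₀ : Measure ℝ) (hν₀ : ν₀ ∈ P2) (δ : ℝ≥0∞) (hδ : 0 < δ) :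
    (∃ ν ∈ P2, W2 ν ν₀ < δ ∧ ¬ StOrder μ ν ∧ ¬ StOrder ν μ) ∧
    (∀ a b : Measure ℝ, a ∈ P2 → b ∈ P2 → StOrder a b →
      ∃ ν ∈ P2, W2 ν ν₀ < δ ∧ ¬ (StOrder a ν ∧ StOrder ν b)) := by
  refine ⟨exists_not_stOrder_W2_lt hμ hν₀ hδ, fun a b ha _ _ => ?_⟩
  obtain ⟨ν, hν, hW, hνa, -⟩ := exists_not_stOrder_W2_lt ha hν₀ hδ
  exact ⟨ν, hν, hW, fun h => hνa h.1⟩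
end
end

section
/- Let f : ℝ → ℝ be continuous with zero-crossing number Z(f) = 1, of polynomial growth, and suppose f ≤ 0 on (−∞, x₀], f ≥ 0 on [x₀, ∞) with f(x₋) < 0 < f(x₊) for some x₋ < x₀ < x₊. Let V' : ℝ → ℝ be continuous and such that all integrals below converge, θ > 0, and σ : ℝ → ℝ satisfy 0 < σ̲² ≤ σ² ≤ σ̄². Then the function F(m) = ∫_ℝ f(x) exp{ −2 ∫₀^x (V'(y) + θy − θm)/σ²(y) dy } dx has exactly one zero. Key step: letting Σ(x) = ∫_{x₀}^x σ(y)^{-2} dy, the derivative F̃'(m) of the shifted function F̃(m) = ∫ f(x) exp{−2∫_{x₀}^x (V'(y)+θy−θm)/σ²(y) dy} dx equals ∫ 2θ Σ(x) f(x) exp{...} dx and is bounded below by a positive constant uniformly in m, since Σ·f ≥ 0 everywhere and Σ·f > 0 near x₊ (for m ≥ 0) and near x₋ (for m < 0). -/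
open MeasureTheory Filter Set ENNReal

noncomputable section

/-!
With `T(x) = 2θ ∫_{x₀}^x σ⁻²`, the exponent splits as `F(m) = exp(-m T(0)) G(m)`, where
`G(m) = ∫ h(x) exp(m T(x)) dx` and `h = f · exp(-2 ∫₀ˣ (V'(y) + θy)/σ²(y) dy)`.
Since `T` is strictly increasing with `T(x₀) = 0`, `h T ≥ 0` everywhere, so every integrand of `G`
is nondecreasing in `m`, strictly where `h T > 0`: `G` is continuous and strictly increasing.
Near `x₊` the increment `G(m) - G(0)` grows at least linearly in `m`, so `G → +∞`; the same
argument for `(-h, -T)` near `x₋` gives `G → -∞`, and the intermediate value theorem concludes.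
-/

open Real Topology

section ExponentialTilt

lemma mul_exp_mul_le_mul_exp_mul {a t m₁ m₂ : ℝ} (hat : 0 ≤ a * t) (hm : m₁ ≤ m₂) :
    a * exp (m₁ * t) ≤ a * exp (m₂ * t) := by
  rcases lt_trichotomy t 0 with ht | rfl | ht
  · have ha : a ≤ 0 := nonpos_of_mul_nonneg_left hat ht
    exact mul_le_mul_of_nonpos_left (exp_le_exp.2 (by nlinarith)) ha
  · simp
  · have ha : 0 ≤ a := nonneg_of_mul_nonneg_left hat ht
    exact mul_le_mul_of_nonneg_left (exp_le_exp.2 (by nlinarith)) ha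

lemma mul_exp_mul_lt_mul_exp_mul {a t m₁ m₂ : ℝ} (hat : 0 < a * t) (hm : m₁ < m₂) :
    a * exp (m₁ * t) < a * exp (m₂ * t) := by
  rcases lt_or_gt_of_ne (right_ne_zero_of_mul hat.ne') with ht | ht
  · have ha : a < 0 := neg_of_mul_pos_left hat ht.le
    exact mul_lt_mul_of_neg_left (exp_lt_exp.2 (by nlinarith)) ha
  · have ha : 0 < a := pos_of_mul_pos_left hat ht.le
    exact mul_lt_mul_of_pos_left (exp_lt_exp.2 (by nlinarith)) ha

lemma exp_mul_le_exp_mul_add_exp_mul {t m m₁ m₂ : ℝ} (h₁ : m₁ ≤ m) (h₂ : m ≤ m₂) :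
    exp (m * t) ≤ exp (m₁ * t) + exp (m₂ * t) := by
  rcases le_total 0 t with ht | ht
  · exact (exp_le_exp.2 (by nlinarith)).trans (le_add_of_nonneg_left (exp_pos _).le)
  · exact (exp_le_exp.2 (by nlinarith)).trans (le_add_of_nonneg_right (exp_pos _).le)

variable {h T : ℝ → ℝ}

theorem continuous_integral_mul_exp_mul
    (hint : ∀ m, Integrable (fun x => h x * exp (m * T x))) :
    Continuous fun m => ∫ x, h x * exp (m * T x) := by
  refine continuous_iff_continuousAt.2 fun m₀ => continuousAt_of_dominated
    (Eventually.of_forall fun m => (hint m).aestronglyMeasurable)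
    (bound := fun x => |h x * exp ((m₀ - 1) * T x)| + |h x * exp ((m₀ + 1) * T x)|) ?_
    ((hint _).abs.add (hint _).abs) (ae_of_all _ fun x => by fun_prop)
  filter_upwards [Ioo_mem_nhds (sub_one_lt m₀) (lt_add_one m₀)] with m hm
  refine ae_of_all _ fun x => ?_
  simp only [norm_mul, Real.norm_eq_abs, abs_mul, abs_exp, ← mul_add]
  exact mul_le_mul_of_nonneg_left (exp_mul_le_exp_mul_add_exp_mul hm.1.le hm.2.le) (abs_nonneg _)

theorem strictMono_integral_mul_exp_mul
    (hint : ∀ m, Integrable (fun x => h x * exp (m * T x))) (hsign : ∀ x, 0 ≤ h x * T x)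
    {x₁ : ℝ} (hh : ContinuousAt h x₁) (hT : ContinuousAt T x₁) (hpos : 0 < h x₁ * T x₁) :
    StrictMono fun m => ∫ x, h x * exp (m * T x) := by
  intro m₁ m₂ hm
  have hnonneg : 0 ≤ fun x => h x * exp (m₂ * T x) - h x * exp (m₁ * T x) := fun x =>
    sub_nonneg.2 (mul_exp_mul_le_mul_exp_mul (hsign x) hm.le)
  have hsupp : ∀ᶠ x in 𝓝 x₁, 0 < h x * T x := (hh.mul hT).eventually (lt_mem_nhds hpos)
  have : 0 < ∫ x, (h x * exp (m₂ * T x) - h x * exp (m₁ * T x)) := by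
    rw [integral_pos_iff_support_of_nonneg hnonneg ((hint m₂).sub (hint m₁))]
    refine Measure.measure_pos_of_mem_nhds volume (mem_of_superset hsupp fun x hx => ?_)
    exact (sub_pos.2 (mul_exp_mul_lt_mul_exp_mul hx hm)).ne'
  rwa [integral_sub (hint m₂) (hint m₁), sub_pos] at this

theorem tendsto_integral_mul_exp_mul_atTop
    (hint : ∀ m, Integrable (fun x => h x * exp (m * T x))) (hsign : ∀ x, 0 ≤ h x * T x)
    {x₁ : ℝ} (hh : ContinuousAt h x₁) (hT : ContinuousAt T x₁) (hh₁ : 0 < h x₁)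
    (hT₁ : 0 < T x₁) :
    Tendsto (fun m => ∫ x, h x * exp (m * T x)) atTop atTop := by
  set G := fun m => ∫ x, h x * exp (m * T x)
  set κ := h x₁ * T x₁ / 2
  have hκ : 0 < κ := by positivity
  have hnear : ∀ᶠ x in 𝓝 x₁, 0 < h x ∧ κ < h x * T x :=
    (hh.eventually (lt_mem_nhds hh₁)).and
      ((hh.mul hT).eventually (lt_mem_nhds (half_lt_self (by positivity))))
  obtain ⟨a, b, hab, hsub⟩ := mem_nhds_iff_exists_Ioo_subset.1 hnear
  -- on `(a, b)`, `h (exp (m T) - 1) ≥ h m T ≥ m κ` by `1 + u ≤ exp u`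
  have hgrowth : ∀ m, 0 ≤ m → G 0 + m * (κ * (b - a)) ≤ G m := by
    intro m hm
    have hdiff : Integrable fun x => h x * exp (m * T x) - h x * exp (0 * T x) :=
      (hint m).sub (hint 0)
    have hlow : ∀ x ∈ Ioo a b, m * κ ≤ h x * exp (m * T x) - h x * exp (0 * T x) := by
      intro x hx
      obtain ⟨hhx, hκx⟩ := hsub hx
      have := add_one_le_exp (m * T x)
      rw [zero_mul, exp_zero]
      nlinarith
    calc G 0 + m * (κ * (b - a))
        = G 0 + m * κ * volume.real (Ioo a b) := by
          rw [Real.volume_real_Ioo_of_le (hab.1.trans hab.2).le, mul_assoc]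
      _ ≤ G 0 + ∫ x in Ioo a b, (h x * exp (m * T x) - h x * exp (0 * T x)) := by
          gcongr
          exact setIntegral_ge_of_const_le_real measurableSet_Ioo measure_Ioo_lt_top.ne hlow
            hdiff.integrableOn
      _ ≤ G 0 + ∫ x, (h x * exp (m * T x) - h x * exp (0 * T x)) := by
          grw [setIntegral_le_integral hdiff (ae_of_all _ fun x =>
            sub_nonneg.2 (mul_exp_mul_le_mul_exp_mul (hsign x) hm))]
      _ = G m := by rw [integral_sub (hint m) (hint 0)]; ring
  refine tendsto_atTop_mono' atTop ((eventually_ge_atTop 0).mono hgrowth) ?_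
  exact tendsto_atTop_add_const_left _ _
    (tendsto_id.atTop_mul_const (mul_pos hκ (sub_pos.2 (hab.1.trans hab.2))))

theorem existsUnique_integral_mul_exp_mul_eq_zero (hh : Continuous h) (hT : Continuous T)
    (hint : ∀ m, Integrable (fun x => h x * exp (m * T x)))
    (hsign : ∀ x, 0 ≤ h x * T x) {xp xm : ℝ} (hhp : 0 < h xp) (hTp : 0 < T xp)
    (hhm : h xm < 0) (hTm : T xm < 0) :
    ∃! m, ∫ x, h x * exp (m * T x) = 0 := by
  have hmono := strictMono_integral_mul_exp_mul hint hsign hh.continuousAt hT.continuousAt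
    (mul_pos hhp hTp)
  obtain ⟨mp, hmp⟩ := ((tendsto_integral_mul_exp_mul_atTop hint hsign hh.continuousAt
    hT.continuousAt hhp hTp).eventually_gt_atTop 0).exists
  -- `(h, T) ↦ (-h, -T)` turns `m ↦ ∫ h exp (m T)` into `m ↦ -∫ h exp (-m T)`
  have hint_neg : ∀ m, Integrable fun x => -h x * exp (m * -T x) := fun m => by
    simpa [mul_neg, neg_mul] using (hint (-m)).neg
  obtain ⟨mm, hmm⟩ := ((tendsto_integral_mul_exp_mul_atTop hint_neg (by simpa using hsign)
    hh.neg.continuousAt hT.neg.continuousAt (neg_pos.2 hhm) (neg_pos.2 hTm)).eventually_gt_atTop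
      0).exists
  have hneg : ∫ x, h x * exp (-mm * T x) < 0 := by
    simpa [integral_neg, mul_neg, neg_mul] using hmm
  obtain ⟨m₀, hm₀⟩ := intermediate_value_univ (-mm) mp (continuous_integral_mul_exp_mul hint)
    ⟨hneg.le, hmp.le⟩
  exact ⟨m₀, hm₀, fun m hm => hmono.injective (hm.trans hm₀.symm)⟩

end ExponentialTilt

lemma intervalIntegrable_one_div_of_le {s : ℝ → ℝ} {c : ℝ} (hs : Measurable s) (hc : 0 < c)
    (hcs : ∀ y, c ≤ s y) (a b : ℝ) : IntervalIntegrable (fun y => 1 / s y) volume a b := by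
  refine (intervalIntegrable_iff).2 (Measure.integrableOn_of_bounded (M := 1 / c)
    measure_Ioc_lt_top.ne (measurable_const.div hs).aestronglyMeasurable (ae_of_all _ fun y => ?_))
  rw [norm_of_nonneg (one_div_pos.2 (hc.trans_le (hcs y))).le]
  exact one_div_le_one_div_of_le hc (hcs y)

lemma strictMono_intervalIntegral_of_pos {q : ℝ → ℝ} (hq : ∀ a b, IntervalIntegrable q volume a b)
    (hpos : ∀ y, 0 < q y) (a : ℝ) : StrictMono fun x => ∫ y in a..x, q y := by
  intro x₁ x₂ hx
  have := intervalIntegral.intervalIntegral_pos_of_pos_on (hq x₁ x₂) (fun y _ => hpos y) hx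
  rw [← intervalIntegral.integral_interval_sub_left (hq a x₂) (hq a x₁)] at this
  linarith

lemma integral_sub_const_div_eq {u s : ℝ → ℝ} (hu : Continuous u)
    (hs : ∀ a b, IntervalIntegrable (fun y => 1 / s y) volume a b) (c x₀ x : ℝ) :
    ∫ y in (0 : ℝ)..x, (u y - c) / s y =
      (∫ y in (0 : ℝ)..x, u y / s y) - c * ((∫ y in x₀..x, 1 / s y) - ∫ y in x₀..0, 1 / s y) := by
  have hsplit : ∀ y, (u y - c) / s y = u y * (1 / s y) - c * (1 / s y) := fun y => by ring
  simp only [hsplit, intervalIntegral.integral_interval_sub_left (hs x₀ x) (hs x₀ 0)]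
  rw [intervalIntegral.integral_sub ((hs 0 x).continuousOn_mul hu.continuousOn)
    ((hs 0 x).const_mul c), intervalIntegral.integral_const_mul]
  simp only [mul_one_div]

lemma mul_nonneg_of_sign_change {f g : ℝ → ℝ} {x₀ : ℝ} (hneg : ∀ x, x ≤ x₀ → f x ≤ 0)
    (hpos : ∀ x, x₀ ≤ x → 0 ≤ f x) (hg : Monotone g) (hg₀ : g x₀ = 0) (x : ℝ) :
    0 ≤ f x * g x := by
  rcases le_total x x₀ with hx | hx
  · exact mul_nonneg_of_nonpos_of_nonpos (hneg x hx) (hg₀ ▸ hg hx)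
  · exact mul_nonneg (hpos x hx) (hg₀ ▸ hg hx)

theorem self_consistency_unique_zero_general (f V' σ : ℝ → ℝ) (θ : ℝ) (hθ : 0 < θ)
    (hf : Continuous f) (hV : Continuous V') (hσm : Measurable σ)
    (σlo σhi : ℝ) (hlo : 0 < σlo)
    (hσ : ∀ x, σlo ^ 2 ≤ (σ x) ^ 2 ∧ (σ x) ^ 2 ≤ σhi ^ 2)
    (x₀ xm xp : ℝ)
    (hneg : ∀ x, x ≤ x₀ → f x ≤ 0) (hposs : ∀ x, x₀ ≤ x → 0 ≤ f x)
    (hfm : f xm < 0) (hfp : 0 < f xp)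
    (hint : ∀ m : ℝ, Integrable (fun x =>
      f x * Real.exp (-2 * ∫ y in (0:ℝ)..x, (V' y + θ * y - θ * m) / (σ y) ^ 2))
      (volume : Measure ℝ)) :
    ∃! m : ℝ,
      (∫ x, f x * Real.exp (-2 * ∫ y in (0:ℝ)..x, (V' y + θ * y - θ * m) / (σ y) ^ 2))
        = 0 := by
  have hσlo : ∀ y, σlo ^ 2 ≤ σ y ^ 2 := fun y => (hσ y).1
  have hq := intervalIntegrable_one_div_of_le (s := fun y => σ y ^ 2) (hσm.pow_const 2)
    (pow_pos hlo 2) hσlo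
  have hw : ∀ a b, IntervalIntegrable (fun y => (V' y + θ * y) / σ y ^ 2) volume a b :=
    fun a b => by simpa only [mul_one_div] using (hq a b).continuousOn_mul (by fun_prop)
  set A := fun x => ∫ y in (0 : ℝ)..x, (V' y + θ * y) / σ y ^ 2
  set h := fun x => f x * exp (-2 * A x)
  set T := fun x => 2 * θ * ∫ y in x₀..x, 1 / σ y ^ 2
  have hh : Continuous h :=
    hf.mul (continuous_exp.comp (continuous_const.mul (intervalIntegral.continuous_primitive hw 0)))
  have hT : StrictMono T := (strictMono_intervalIntegral_of_pos hq
    (fun y => one_div_pos.2 ((pow_pos hlo 2).trans_le (hσlo y))) x₀).const_mul (by positivity)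
  have hT₀ : T x₀ = 0 := by simp [T]
  have hF : ∀ m x, f x * exp (-2 * ∫ y in (0 : ℝ)..x, (V' y + θ * y - θ * m) / σ y ^ 2) =
      exp (-(m * T 0)) * (h x * exp (m * T x)) := fun m x => by
    rw [integral_sub_const_div_eq (by fun_prop) hq (θ * m) x₀ x]
    calc _ = f x * exp (-(m * T 0) + (-2 * A x + m * T x)) := by congr 2; ring
      _ = _ := by rw [exp_add, exp_add]; ring
  have hint_h : ∀ m, Integrable fun x => h x * exp (m * T x) := fun m =>
    ((hint m).const_mul (exp (m * T 0))).congr (ae_of_all _ fun x => by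
      simp only [hF, ← mul_assoc, ← exp_add, add_neg_cancel, exp_zero, one_mul])
  have hsign : ∀ x, 0 ≤ h x * T x := fun x =>
    calc 0 ≤ f x * T x * exp (-2 * A x) :=
          mul_nonneg (mul_nonneg_of_sign_change hneg hposs hT.monotone hT₀ x) (exp_pos _).le
      _ = h x * T x := by ring
  have hxm : xm < x₀ := lt_of_not_ge fun hx => (hposs xm hx).not_gt hfm
  have hxp : x₀ < xp := lt_of_not_ge fun hx => (hneg xp hx).not_gt hfp
  simp only [hF, integral_const_mul, mul_eq_zero, exp_ne_zero, false_or]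
  exact existsUnique_integral_mul_exp_mul_eq_zero hh
    (continuous_const.mul (intervalIntegral.continuous_primitive hq x₀)) hint_h hsign
    (mul_pos hfp (exp_pos _)) (hT₀ ▸ hT hxp) (mul_neg_of_neg_of_pos hfm (exp_pos _))
    (hT₀ ▸ hT hxm)

/-- If `f` is continuous, of polynomial growth, with zero-crossing number 1
(nonpositive left of `x₀`, nonnegative right of `x₀`, strictly negative at some `x₋ < x₀`
and strictly positive at some `x₊ > x₀`), `V'` is continuous with the relevant integrals
convergent, `θ > 0` and `σ` is non-degenerate and bounded, then
`F(m) = ∫ f(x) exp{−2∫₀ˣ (V'(y)+θy−θm)/σ²(y) dy} dx` has exactly one zero. -/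
theorem self_consistency_unique_zero (f V' σ : ℝ → ℝ) (θ : ℝ) (hθ : 0 < θ)
    (hf : Continuous f) (hV : Continuous V') (hσm : Measurable σ)
    (σlo σhi : ℝ) (hlo : 0 < σlo)
    (hσ : ∀ x, σlo ^ 2 ≤ (σ x) ^ 2 ∧ (σ x) ^ 2 ≤ σhi ^ 2)
    (x₀ xm xp : ℝ) (hxm : xm < x₀) (hxp : x₀ < xp)
    (hneg : ∀ x, x ≤ x₀ → f x ≤ 0) (hposs : ∀ x, x₀ ≤ x → 0 ≤ f x)
    (hfm : f xm < 0) (hfp : 0 < f xp)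
    (hgrowth : ∃ L κ : ℝ, 0 ≤ L ∧ 1 ≤ κ ∧ ∀ x, |f x| ≤ L * (1 + |x| ^ κ))
    (hint : ∀ m : ℝ, Integrable (fun x =>
      f x * Real.exp (-2 * ∫ y in (0:ℝ)..x, (V' y + θ * y - θ * m) / (σ y) ^ 2))
      (volume : Measure ℝ))
    (hint' : ∀ m : ℝ, Integrable (fun x =>
      (∫ y in x₀..x, 1 / (σ y) ^ 2) * f x *
        Real.exp (-2 * ∫ y in x₀..x, (V' y + θ * y - θ * m) / (σ y) ^ 2))
      (volume : Measure ℝ)) :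
    ∃! m : ℝ,
      (∫ x, f x * Real.exp (-2 * ∫ y in (0:ℝ)..x, (V' y + θ * y - θ * m) / (σ y) ^ 2))
        = 0 :=
  self_consistency_unique_zero_general f V' σ θ hθ hf hV hσm σlo σhi hlo hσ x₀ xm xp hneg hposs hfm
    hfp hint
end
end
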